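/- arXiv:math/9807181 — 9 statements merged into one kernel-verified Lean document; each statement's English description precedes it below -/
import Mathlib

section
/- In the tree-based inverse γ-system of free R-modules, for every nonzero element a ∈ Fact(A), there exist i < j < γ such that the restriction of a_{i,j} to generators x_{ν,l} with l < j is nonzero. -/
namespace Paper644

/-- `S` is a bounded subset of `γ`. -/
def bddIn (γ : Ordinal) (S : Set Ordinal) : Prop := ∃ β < γ, ∀ x ∈ S, x < β

/-- `S` is an unbounded subset of `γ`. -/
def unbddIn (γ : Ordinal) (S : Set Ordinal) : Prop := ∀ β < γ, ∃ x ∈ S, β ≤ x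

/-- `Ind γ = {(i,j) : i < j < γ}`. -/
def Ind (γ : Ordinal) : Set (Ordinal × Ordinal) := {p | p.1 < p.2 ∧ p.2 < γ}

/-- `dom I = {i : ∃ j, (i,j) ∈ I}`. -/
def dom (I : Set (Ordinal × Ordinal)) : Set Ordinal := {i | ∃ j, (i, j) ∈ I}

/-- The fiber `I_i = {j : (i,j) ∈ I}`. -/
def fib (I : Set (Ordinal × Ordinal)) (i : Ordinal) : Set Ordinal := {j | (i, j) ∈ I}

/-- `I` is eventually coherent: `dom I` is unbounded in `γ` and for every `i ∈ dom I`,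
`dom I \ I_i` is a bounded subset of `γ`. -/
def EvCoh (γ : Ordinal) (I : Set (Ordinal × Ordinal)) : Prop :=
  unbddIn γ (dom I) ∧ ∀ i ∈ dom I, bddIn γ (dom I \ fib I i)

open Finsupp

variable (R : Type) [Ring R] (T : Ordinal → Type)

/-- `G_i`, the free `R`-module with generators indexed by `T i × Ordinal`
(only generators `x_{ν,l}` with `i < l < γ` are actually used). -/
abbrev GMod (i : Ordinal) : Type _ := (T i × Ordinal) →₀ R

/-- Coherence of the tree restriction maps: `res i j ∘ res j k = res i k`. -/
def resCoh (res : ∀ i j, i < j → T j → T i) : Prop :=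
  ∀ i j k (hij : i < j) (hjk : j < k) (x : T k),
    res i j hij (res j k hjk x) = res i k (hij.trans hjk) x

/-- `T` is a tree of height `γ`: all levels below `γ` are nonempty. -/
def treeHeight (γ : Ordinal) : Prop := ∀ i < γ, Nonempty (T i)

/-- The homomorphisms `h i j` are determined on generators by
`h i j (x_{η,l}) = x_{η↾i,l} - x_{η↾i,j}`. -/
def hdef (res : ∀ i j, i < j → T j → T i)
    (h : ∀ i j, i < j → GMod R T j →ₗ[R] GMod R T i) : Prop :=
  ∀ i j (hij : i < j) (η : T j) (l : Ordinal),
    h i j hij (Finsupp.single (η, l) (1 : R)) =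
      Finsupp.single (res i j hij η, l) (1 : R) -
        Finsupp.single (res i j hij η, j) (1 : R)

/-- `Gr(A)`: sequences `⟨a_{i,j}⟩_{i<j<γ}` with `a_{i,j} ∈ G_i` (support in indices
`i < l < γ`) and `a_{i,k} = a_{i,j} + h_{i,j}(a_{j,k})` for `i < j < k < γ`.
(Coordinates outside `i < j < γ` are required to be `0`.) -/
def Gr (γ : Ordinal) (h : ∀ i j, i < j → GMod R T j →ₗ[R] GMod R T i) :
    Set (∀ i, Ordinal → GMod R T i) :=
  {a | (∀ i j, ¬(i < j ∧ j < γ) → a i j = 0) ∧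
       (∀ i j, i < j → j < γ → ∀ p ∈ (a i j).support, i < p.2 ∧ p.2 < γ) ∧
       (∀ i j k (hij : i < j) (hjk : j < k), k < γ →
          a i k = a i j + h i j hij (a j k))}

/-- `Fact(A)`: sequences of the form `⟨y_i - h_{i,j}(y_j)⟩_{i<j<γ}` for some
`y ∈ ∏_{k<γ} G_k`. (Coordinates outside `i < j < γ` are required to be `0`.) -/
def Fact (γ : Ordinal) (h : ∀ i j, i < j → GMod R T j →ₗ[R] GMod R T i) :
    Set (∀ i, Ordinal → GMod R T i) :=
  {a | (∀ i j, ¬(i < j ∧ j < γ) → a i j = 0) ∧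
       ∃ y : ∀ i, GMod R T i,
         (∀ i, i < γ → ∀ p ∈ (y i).support, i < p.2 ∧ p.2 < γ) ∧
         ∀ i j (hij : i < j), j < γ → a i j = y i - h i j hij (y j)}

/-- `t` is a `γ`-branch of `T`. -/
def IsBranch (γ : Ordinal) (res : ∀ i j, i < j → T j → T i)
    (t : ∀ i, i < γ → T i) : Prop :=
  ∀ i j (hij : i < j) (hj : j < γ), res i j hij (t j hj) = t i (hij.trans hj)

/-- The element `x^t = ⟨x_{t(i),j}⟩_{i<j<γ}` associated to a `γ`-branch `t`. -/
noncomputable def branchElt (γ : Ordinal) (t : ∀ i, i < γ → T i) :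
    ∀ i, Ordinal → GMod R T i :=
  fun i j => if h : i < γ ∧ i < j ∧ j < γ
    then Finsupp.single (t i h.1, j) (1 : R) else 0

/-- The set `{x^t : t a γ-branch of T}`. -/
def BrSet (γ : Ordinal) (res : ∀ i j, i < j → T j → T i) :
    Set (∀ i, Ordinal → GMod R T i) :=
  {a | ∃ t : ∀ i, i < γ → T i, IsBranch T γ res t ∧ a = branchElt R T γ t}

theorem stmt8 (γ : Ordinal) (hγ : Order.IsSuccLimit γ)
    (res : ∀ i j, i < j → T j → T i) (hres : resCoh T res) (hT : treeHeight T γ)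
    (h : ∀ i j, i < j → GMod R T j →ₗ[R] GMod R T i) (hh : hdef R T res h)
    (a : ∀ i, Ordinal → GMod R T i) (ha : a ∈ Fact R T γ h) (hne : a ≠ 0) :
    ∃ i j, i < j ∧ j < γ ∧ ∃ (ν : T i) (l : Ordinal), l < j ∧ (a i j) (ν, l) ≠ 0 := by
  by_contra hcon
  push_neg at hcon
  obtain ⟨h0, y, hy, hay⟩ := ha
  have hkey : ∀ i j (hij : i < j), j < γ → ∀ (ν : T i) (l : Ordinal), l < j →
      (h i j hij (y j)) (ν, l) = 0 := by
    intro i j hij hjγ ν l hlj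
    have hb := hy j hjγ
    rw [← Finsupp.sum_single (y j), map_finsuppSum, Finsupp.sum_apply]
    apply Finset.sum_eq_zero
    intro p hp
    have hpj : j < p.2 := (hb p hp).1
    show ((h i j hij) (Finsupp.single p ((y j) p))) (ν, l) = 0
    have h1 : Finsupp.single p (y j p) = (y j p) • Finsupp.single p (1:R) := by
      rw [Finsupp.smul_single, smul_eq_mul, mul_one]
    rw [h1, map_smul]
    have h2 : (Finsupp.single p (1:R)) = Finsupp.single (p.1, p.2) (1:R) := by
      simp
    rw [h2, hh i j hij p.1 p.2]
    have hne1 : p.2 ≠ l := (hlj.trans hpj).ne'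
    have hne2 : j ≠ l := hlj.ne'
    simp [Finsupp.single_apply, Prod.ext_iff, hne1, hne2]
  have hy0 : ∀ i, i < γ → y i = 0 := by
    intro i hiγ
    ext p
    obtain ⟨ν, l⟩ := p
    by_cases hl : i < l ∧ l < γ
    · have hj : Order.succ l < γ := hγ.succ_lt hl.2
      have hlj : l < Order.succ l := Order.lt_succ l
      have hij : i < Order.succ l := hl.1.trans hlj
      have h1 := hcon i (Order.succ l) hij hj ν l hlj
      rw [hay i (Order.succ l) hij hj] at h1
      have h2 := hkey i (Order.succ l) hij hj ν l hlj
      simp only [Finsupp.sub_apply, h2, sub_zero] at h1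
      simpa using h1
    · by_contra hne0
      exact hl (hy i hiγ (ν, l) (Finsupp.mem_support_iff.mpr hne0))
  apply hne
  funext i j
  by_cases hij : i < j ∧ j < γ
  · rw [hay i j hij.1 hij.2, hy0 i (hij.1.trans hij.2), hy0 j hij.2, map_zero,
      sub_zero]
    rfl
  · rw [h0 i j hij]
    rfl

end Paper644
end

section
/- In the tree-based inverse γ-system of free R-modules, the elements x^t for γ-branches t of T are independent over Fact(A): the submodule generated by {x^t : t a γ-branch} intersects Fact(A) only in 0. -/
namespace Paper644

open Finsupp

variable (R : Type) [Ring R] (T : Ordinal → Type)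

lemma happly (γ : Ordinal) (res : ∀ i j, i < j → T j → T i)
    (h : ∀ i j, i < j → GMod R T j →ₗ[R] GMod R T i) (hh : hdef R T res h)
    (i j : Ordinal) (hij : i < j) (z : GMod R T j)
    (ν : T i) (l : Ordinal) (hlj : l ≠ j) (hz : ∀ p ∈ z.support, p.2 ≠ l) :
    (h i j hij z) (ν, l) = 0 := by
  conv_lhs => rw [← Finsupp.sum_single z, map_finsuppSum, Finsupp.sum_apply]
  refine Finset.sum_eq_zero fun p hp => ?_
  classical
  show ((h i j hij) (Finsupp.single p (z p))) (ν, l) = 0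
  have h1 : Finsupp.single p (z p) = z p • Finsupp.single p (1 : R) := by
    rw [Finsupp.smul_single', mul_one]
  rw [h1, map_smul, hh i j hij p.1 p.2, Finsupp.smul_apply, Finsupp.sub_apply,
    Finsupp.single_apply, Finsupp.single_apply, if_neg, if_neg]
  · simp
  · intro he
    exact hlj ((Prod.mk.injEq _ _ _ _).mp he).2.symm
  · intro he
    exact hz p hp ((Prod.mk.injEq _ _ _ _).mp he).2

theorem stmt9 (γ : Ordinal) (hγ : Order.IsSuccLimit γ)
    (res : ∀ i j, i < j → T j → T i) (hres : resCoh T res) (hT : treeHeight T γ)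
    (h : ∀ i j, i < j → GMod R T j →ₗ[R] GMod R T i) (hh : hdef R T res h) :
    ∀ a ∈ Submodule.span R (BrSet R T γ res), a ∈ Fact R T γ h → a = 0 := by
  classical
  -- elements of the span have coordinates supported on second coordinate = j
  have hspan : ∀ a ∈ Submodule.span R (BrSet R T γ res),
      ∀ i j (ν : T i) (l : Ordinal), l ≠ j → a i j (ν, l) = 0 := by
    intro a ha
    induction ha using Submodule.span_induction with
    | mem x hx =>
      obtain ⟨t, _, rfl⟩ := hx
      intro i j ν l hl
      unfold branchElt
      split
      · rw [Finsupp.single_apply, if_neg]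
        intro he
        exact hl ((Prod.mk.injEq _ _ _ _).mp he).2.symm
      · rfl
    | zero => intro i j ν l _; rfl
    | add x y hx hy px py =>
      intro i j ν l hl
      have : (x + y) i j (ν, l) = x i j (ν, l) + y i j (ν, l) := rfl
      rw [this, px i j ν l hl, py i j ν l hl, add_zero]
    | smul r x hx px =>
      intro i j ν l hl
      have : (r • x) i j (ν, l) = r * x i j (ν, l) := rfl
      rw [this, px i j ν l hl, mul_zero]
  intro a ha hFact
  have hspan : ∀ i j (ν : T i) (l : Ordinal), l ≠ j → a i j (ν, l) = 0 := hspan a ha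
  obtain ⟨h0, y, hysupp, hyeq⟩ := hFact
  -- every y k vanishes
  have hy : ∀ k, k < γ → y k = 0 := by
    intro k hk
    ext ⟨ν, l⟩
    rw [Finsupp.coe_zero, Pi.zero_apply]
    by_contra hne
    have hmem : (ν, l) ∈ (y k).support := Finsupp.mem_support_iff.mpr hne
    have hkl := hysupp k hk _ hmem
    set j := Order.succ l with hj
    have hjγ : j < γ := hγ.succ_lt hkl.2
    have hlj : l < j := Order.lt_succ l
    have hkj : k < j := hkl.1.trans hlj
    have heq : a k j (ν, l) = (y k - h k j hkj (y j)) (ν, l) := by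
      rw [hyeq k j hkj hjγ]
    rw [hspan k j ν l hlj.ne, Finsupp.sub_apply] at heq
    have hz : (h k j hkj (y j)) (ν, l) = 0 := by
      refine happly R T γ res h hh k j hkj (y j) ν l hlj.ne fun p hp => ?_
      have := hysupp j hjγ p hp
      exact fun hpl => absurd (hpl ▸ this.1) hlj.not_gt
    rw [hz, sub_zero] at heq
    exact hne heq.symm
  -- conclude a = 0
  funext i j
  by_cases hij : i < j ∧ j < γ
  · rw [hyeq i j hij.1 hij.2, hy i (hij.1.trans hij.2), hy j hij.2, map_zero, sub_zero]
    rfl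
  · exact h0 i j hij

end Paper644
end

section
/- Suppose γ has uncountable cofinality and a ∈ Gr(A) in the tree-based inverse γ-system. Then for every i < γ, the union over j with i < j < γ of the sets supp(a_{i,j}) ∩ (T_i × j) is finite, where supp denotes the finite set of basis indices (ν,l) with nonzero coefficient. -/
namespace Paper644

open Finsupp

variable (R : Type) [Ring R] (T : Ordinal → Type)

theorem stmt12 (γ : Ordinal) (hγ : Order.IsSuccLimit γ) (hcof : Cardinal.aleph0 < γ.cof)
    (res : ∀ i j, i < j → T j → T i) (hres : resCoh T res) (hT : treeHeight T γ)
    (h : ∀ i j, i < j → GMod R T j →ₗ[R] GMod R T i) (hh : hdef R T res h)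
    (a : ∀ i, Ordinal → GMod R T i) (ha : a ∈ Gr R T γ h)
    (i : Ordinal) (hi : i < γ) :
    {p : T i × Ordinal | ∃ j, i < j ∧ j < γ ∧ p ∈ (a i j).support ∧ p.2 < j}.Finite := by
  classical
  obtain ⟨hz, hsupp, hcoh⟩ := ha
  have key : ∀ j k (hij : i < j) (hjk : j < k), k < γ → ∀ p : T i × Ordinal, p.2 < j →
      (a i k) p = (a i j) p := by
    intro j k hij hjk hkγ p hp
    rw [hcoh i j k hij hjk hkγ]
    rw [Finsupp.add_apply]
    have hzero : (h i j hij (a j k)) p = 0 := by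
      conv_lhs => rw [← Finsupp.sum_single (a j k)]
      rw [map_finsuppSum, Finsupp.sum_apply, Finsupp.sum]
      apply Finset.sum_eq_zero
      intro q hq
      have hq2 : j < q.2 := (hsupp j k hjk hkγ q hq).1
      have : Finsupp.single q ((a j k) q) = ((a j k) q) • Finsupp.single q (1 : R) := by
        rw [Finsupp.smul_single', mul_one]
      rw [this, map_smul, Finsupp.smul_apply]
      have := hh i j hij q.1 q.2
      rw [show (q.1, q.2) = q from rfl] at this
      rw [this, Finsupp.sub_apply, Finsupp.single_apply, Finsupp.single_apply,
        if_neg, if_neg, sub_zero, smul_zero]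
      · intro hpq
        exact absurd (congrArg Prod.snd hpq) (by simpa using hp.ne')
      · intro hpq
        have := congrArg Prod.snd hpq
        simp only at this
        exact absurd this (fun e => (hp.trans hq2).ne' e)
    rw [hzero, add_zero]
  by_contra hinf
  replace hinf : Set.Infinite _ := hinf
  set f := hinf.natEmbedding with hf
  choose j hij hjγ hmem hlt using fun n => (f n).2
  have hβγ : iSup j < γ := by
    apply Ordinal.iSup_lt_ord_lift _ (fun n => hjγ n)
    rwa [Cardinal.mk_nat, Cardinal.lift_aleph0]
  set k := iSup j + 1 with hk
  have hkγ : k < γ := by rw [hk, Ordinal.add_one_eq_succ]; exact hγ.succ_lt hβγ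
  have hik : i < k := (hij 0).trans_le ((Ordinal.le_iSup j 0).trans (le_of_lt (lt_add_one _)))
  have hall : ∀ n, (f n : T i × Ordinal) ∈ (a i k).support := by
    intro n
    have hjk : j n < k := (Ordinal.le_iSup j n).trans_lt (lt_add_one _)
    rw [Finsupp.mem_support_iff, key (j n) k (hij n) hjk hkγ _ (hlt n)]
    exact Finsupp.mem_support_iff.mp (hmem n)
  have : (↑(a i k).support : Set (T i × Ordinal)).Infinite := by
    apply Set.infinite_of_injective_forall_mem
      (f := fun n => (f n : T i × Ordinal)) ?_ ?_
    · intro m n hmn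
      exact f.injective (Subtype.ext hmn)
    · exact hall
  exact this (Set.toFinite _)

end Paper644
end

section
/- Suppose γ has uncountable cofinality and a ∈ Gr(A) in the tree-based inverse γ-system. Then there exists b ∈ Gr(A) with a − b ∈ Fact(A) such that: for every i < γ there is i* > i so that for all j ≥ i*, the restriction of b_{i,j} to generators x_{ν,l} with l < j is zero, and moreover for such pairs (i,j), b_{i,j} is supported only on generators x_{ν,l} with l = j. -/
namespace Paper644

open Finsupp

variable (R : Type) [Ring R] (T : Ordinal → Type)

section Aux

variable {R : Type} [Ring R] {T : Ordinal → Type}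

/-- If `l ≠ j` and no index in the support of `z` equals `l`, then `h i j z` vanishes
at all coordinates `(ν, l)`. -/
lemma hzero_aux {res : ∀ i j, i < j → T j → T i}
    {h : ∀ i j, i < j → GMod R T j →ₗ[R] GMod R T i} (hh : hdef R T res h)
    {i j : Ordinal} (hij : i < j) (z : GMod R T j) (ν : T i) (l : Ordinal)
    (hlj : l ≠ j) (hz : ∀ p ∈ z.support, p.2 ≠ l) :
    h i j hij z (ν, l) = 0 := by
  have hrep : h i j hij z = ∑ p ∈ z.support,
      z p • (Finsupp.single (res i j hij p.1, p.2) (1 : R) -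
        Finsupp.single (res i j hij p.1, j) (1 : R)) := by
    conv_lhs => rw [← Finsupp.sum_single z]
    rw [Finsupp.sum, map_sum]
    refine Finset.sum_congr rfl fun p _ => ?_
    obtain ⟨η, m⟩ := p
    have h1 : (Finsupp.single (η, m) (z (η, m)) : GMod R T j)
        = z (η, m) • Finsupp.single (η, m) (1 : R) := by
      rw [Finsupp.smul_single, smul_eq_mul, mul_one]
    rw [h1, map_smul, hh i j hij η m]
  rw [hrep, Finsupp.finset_sum_apply]
  refine Finset.sum_eq_zero fun p hp => ?_
  have h1 : (res i j hij p.1, p.2) ≠ (ν, l) := fun e => hz p hp (congrArg Prod.snd e)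
  have h2 : (res i j hij p.1, j) ≠ (ν, l) := fun e => hlj (congrArg Prod.snd e).symm
  rw [Finsupp.smul_apply, Finsupp.sub_apply, Finsupp.single_eq_of_ne' h1,
    Finsupp.single_eq_of_ne' h2, sub_zero, smul_zero]

/-- Coordinates with index `l` below `j` stabilize. -/
lemma stab_aux {γ : Ordinal} {res : ∀ i j, i < j → T j → T i}
    {h : ∀ i j, i < j → GMod R T j →ₗ[R] GMod R T i} (hh : hdef R T res h)
    {a : ∀ i, Ordinal → GMod R T i} (ha : a ∈ Gr R T γ h)
    {i j j' : Ordinal} (hij : i < j) (hjj' : j ≤ j') (hj' : j' < γ)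
    (ν : T i) (l : Ordinal) (hl : l < j) :
    a i j' (ν, l) = a i j (ν, l) := by
  rcases hjj'.lt_or_eq with hlt | rfl
  · rw [ha.2.2 i j j' hij hlt hj', Finsupp.add_apply,
      hzero_aux hh hij (a j j') ν l hl.ne (fun p hp =>
        (hl.trans (ha.2.1 j j' hlt hj' p hp).1).ne'), add_zero]
  · rfl

/-- Composition rule `h i j ∘ h j k = h i k`. -/
lemma hcomp_aux {res : ∀ i j, i < j → T j → T i} (hres : resCoh T res)
    {h : ∀ i j, i < j → GMod R T j →ₗ[R] GMod R T i} (hh : hdef R T res h)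
    {i j k : Ordinal} (hij : i < j) (hjk : j < k) (z : GMod R T k) :
    h i j hij (h j k hjk z) = h i k (hij.trans hjk) z := by
  induction z using Finsupp.induction_linear with
  | zero => simp
  | add f g hf hg => rw [map_add, map_add, map_add, hf, hg]
  | single p c =>
    obtain ⟨η, m⟩ := p
    have h1 : (Finsupp.single (η, m) c : GMod R T k)
        = c • Finsupp.single (η, m) (1 : R) := by
      rw [Finsupp.smul_single, smul_eq_mul, mul_one]
    rw [h1, map_smul, map_smul, map_smul, hh j k hjk η m, map_sub,
      hh i j hij _ m, hh i j hij _ k, hh i k (hij.trans hjk) η m,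
      hres i j k hij hjk η]
    congr 1
    abel

/-- The function underlying `y i` has finite support. -/
lemma yfin_aux {γ : Ordinal} (hγ : Order.IsSuccLimit γ) (hcof : Cardinal.aleph0 < γ.cof)
    {res : ∀ i j, i < j → T j → T i}
    {h : ∀ i j, i < j → GMod R T j →ₗ[R] GMod R T i} (hh : hdef R T res h)
    {a : ∀ i, Ordinal → GMod R T i} (ha : a ∈ Gr R T γ h) (i : Ordinal) :
    (Function.support fun p : T i × Ordinal =>
      if hc : i < p.2 ∧ p.2 < γ then a i (p.2 + 1) p else 0).Finite := by
  set f : T i × Ordinal → R := fun p =>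
    if hc : i < p.2 ∧ p.2 < γ then a i (p.2 + 1) p else 0 with hf
  have hmem : ∀ p ∈ Function.support f, (i < p.2 ∧ p.2 < γ) ∧ a i (p.2 + 1) p ≠ 0 := by
    intro p hp
    by_cases hc : i < p.2 ∧ p.2 < γ
    · refine ⟨hc, ?_⟩
      have hfp : f p = a i (p.2 + 1) p := by simp only [hf]; exact dif_pos hc
      have : f p ≠ 0 := hp
      rwa [hfp] at this
    · have hfp : f p = 0 := by simp only [hf]; exact dif_neg hc
      exact absurd hfp hp
  have hsucclt : ∀ o : Ordinal, o < γ → o + 1 < γ := by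
    intro o ho
    rw [Ordinal.add_one_eq_succ]
    exact hγ.succ_lt ho
  have hL : (Prod.snd '' Function.support f).Finite := by
    by_contra hinf
    have hinf' : (Prod.snd '' Function.support f).Infinite := hinf
    set e := hinf'.natEmbedding with he
    have hlt : ∀ n : ℕ, ((e n : Ordinal)) < γ := by
      intro n
      obtain ⟨p, hp, hpe⟩ := (e n).2
      exact hpe ▸ (hmem p hp).1.2
    have hsup : (⨆ n : ℕ, (e n : Ordinal)) < γ :=
      Ordinal.iSup_lt_ord_lift (c := γ) (by simp only [Cardinal.mk_nat, Cardinal.lift_aleph0]; exact hcof) hlt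
    set β := max (⨆ n : ℕ, (e n : Ordinal)) i with hβ
    have hβγ : β < γ := by
      refine max_lt hsup ?_
      obtain ⟨n⟩ := instNonemptyOfInhabited (α := ℕ)
      obtain ⟨p, hp, _⟩ := (e n).2
      exact (hmem p hp).1.1.trans (hmem p hp).1.2
    have hjγ : β + 1 < γ := hsucclt β hβγ
    have hijb : i < β + 1 := by
      rw [Ordinal.add_one_eq_succ]
      exact (le_max_right _ _).trans_lt (Order.lt_succ β)
    set F : ℕ → T i × Ordinal := fun n => ((e n).2).choose with hF
    have hFs : ∀ n, F n ∈ Function.support f ∧ (F n).2 = (e n : Ordinal) := by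
      intro n
      obtain ⟨hp, hpe⟩ := ((e n).2).choose_spec
      exact ⟨hp, hpe⟩
    have hFmem : ∀ n, F n ∈ ((a i (β + 1)).support : Set (T i × Ordinal)) := by
      intro n
      obtain ⟨hp, hpe⟩ := hFs n
      obtain ⟨⟨hi2, h2γ⟩, hne⟩ := hmem _ hp
      have hle2 : (F n).2 ≤ β :=
        hpe ▸ (Ordinal.le_iSup (fun n : ℕ => ((e n : Ordinal))) n).trans (le_max_left _ _)
      have hsle : (F n).2 + 1 ≤ β + 1 := by
        rw [Ordinal.add_one_eq_succ, Ordinal.add_one_eq_succ]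
        exact Order.succ_le_succ hle2
      have hisk : i < (F n).2 + 1 := hi2.trans (by
        rw [Ordinal.add_one_eq_succ]; exact Order.lt_succ _)
      have hstab : a i (β + 1) ((F n).1, (F n).2) = a i ((F n).2 + 1) ((F n).1, (F n).2) :=
        stab_aux hh ha hisk hsle hjγ (F n).1 (F n).2 (by
          rw [Ordinal.add_one_eq_succ]; exact Order.lt_succ _)
      refine Finsupp.mem_support_iff.2 ?_
      have : ((F n).1, (F n).2) = F n := rfl
      rw [← this, hstab, this]
      exact hne
    have hFinj : Function.Injective F := fun m n hmn =>
      e.injective (Subtype.ext (by rw [← (hFs m).2, ← (hFs n).2, hmn]))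
    exact absurd (Set.infinite_of_injective_forall_mem hFinj hFmem)
      ((a i (β + 1)).support.finite_toSet.not_infinite)
  have hsub : Function.support f ⊆
      ⋃ l ∈ Prod.snd '' Function.support f, ((a i (l + 1)).support : Set (T i × Ordinal)) := by
    intro p hp
    exact Set.mem_biUnion ⟨p, hp, rfl⟩ (Finsupp.mem_support_iff.2 (hmem p hp).2)
  exact ((hL.biUnion fun l _ => (a i (l + 1)).support.finite_toSet).subset hsub)

end Aux

theorem stmt13 (γ : Ordinal) (hγ : Order.IsSuccLimit γ) (hcof : Cardinal.aleph0 < γ.cof)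
    (res : ∀ i j, i < j → T j → T i) (hres : resCoh T res) (hT : treeHeight T γ)
    (h : ∀ i j, i < j → GMod R T j →ₗ[R] GMod R T i) (hh : hdef R T res h)
    (a : ∀ i, Ordinal → GMod R T i) (ha : a ∈ Gr R T γ h) :
    ∃ b ∈ Gr R T γ h, a - b ∈ Fact R T γ h ∧
      ∀ i < γ, ∃ i', i < i' ∧ i' < γ ∧ ∀ j, i' ≤ j → j < γ →
        (∀ (ν : T i) (l : Ordinal), l < j → (b i j) (ν, l) = 0) ∧
        (∀ (ν : T i) (l : Ordinal), l ≠ j → (b i j) (ν, l) = 0) := by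
  have hsucclt : ∀ o : Ordinal, o < γ → o + 1 < γ := fun o ho => by
    rw [Ordinal.add_one_eq_succ]; exact hγ.succ_lt ho
  have hltsucc : ∀ o : Ordinal, o < o + 1 := fun o => by
    rw [Ordinal.add_one_eq_succ]; exact Order.lt_succ o
  set y : ∀ i, GMod R T i := fun i =>
    Finsupp.ofSupportFinite _ (yfin_aux hγ hcof hh ha i) with hy
  have ycoe : ∀ i (p : T i × Ordinal),
      y i p = if _ : i < p.2 ∧ p.2 < γ then a i (p.2 + 1) p else 0 := fun i p => rfl
  have ysupp : ∀ j (p : T j × Ordinal), p ∈ (y j).support → j < p.2 ∧ p.2 < γ := by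
    intro j p hp
    have hne := Finsupp.mem_support_iff.1 hp
    rw [ycoe] at hne
    by_cases hc : j < p.2 ∧ p.2 < γ
    · exact hc
    · rw [dif_neg hc] at hne; exact absurd rfl hne
  have key : ∀ i j (hij : i < j), j < γ → ∀ (ν : T i) (l : Ordinal), l ≠ j →
      (a i j - y i + h i j hij (y j)) (ν, l) = 0 := by
    intro i j hij hj ν l hlj
    rcases lt_or_gt_of_ne hlj with hl | hl
    · have hterm : h i j hij (y j) (ν, l) = 0 :=
        hzero_aux hh hij (y j) ν l hlj fun p hp => (hl.trans (ysupp j p hp).1).ne'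
      rw [Finsupp.add_apply, Finsupp.sub_apply, hterm, add_zero]
      by_cases hil : i < l
      · have hyi : y i (ν, l) = a i (l + 1) (ν, l) := by
          rw [ycoe]; exact dif_pos ⟨hil, hl.trans hj⟩
        have hsle : l + 1 ≤ j := by
          rw [Ordinal.add_one_eq_succ]; exact Order.succ_le_of_lt hl
        rw [hyi, stab_aux hh ha (hil.trans (hltsucc l)) hsle hj ν l (hltsucc l), sub_self]
      · have h1 : a i j (ν, l) = 0 := by
          by_contra hne
          exact hil (ha.2.1 i j hij hj (ν, l) (Finsupp.mem_support_iff.2 hne)).1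
        have h2 : y i (ν, l) = 0 := by
          rw [ycoe]; exact dif_neg fun hc => hil hc.1
        rw [h1, h2, sub_zero]
    · by_cases hlγ : l < γ
      · have hk : l + 1 < γ := hsucclt l hlγ
        have hyi : y i (ν, l) = a i (l + 1) (ν, l) := by
          rw [ycoe]; exact dif_pos ⟨hij.trans hl, hlγ⟩
        have hdiff : h i j hij (y j - a j (l + 1)) (ν, l) = 0 := by
          refine hzero_aux hh hij _ ν l hlj fun p hp => ?_
          obtain ⟨η, m⟩ := p
          intro hpl
          have hml : m = l := hpl
          subst hml
          have hzp : (y j - a j (m + 1)) (η, m) = 0 := by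
            rw [Finsupp.sub_apply, ycoe, dif_pos ⟨hl, hlγ⟩]
            exact sub_self _
          exact absurd hzp (Finsupp.mem_support_iff.1 hp)
        have hcohr := ha.2.2 i j (l + 1) hij (hl.trans (hltsucc l)) hk
        have e1 : h i j hij (y j) (ν, l) - h i j hij (a j (l + 1)) (ν, l) = 0 := by
          rw [← Finsupp.sub_apply, ← map_sub]; exact hdiff
        rw [Finsupp.add_apply, Finsupp.sub_apply, hyi, hcohr, Finsupp.add_apply]
        have e2 : a i j (ν, l) - (a i j (ν, l) + h i j hij (a j (l + 1)) (ν, l))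
            + h i j hij (y j) (ν, l)
            = h i j hij (y j) (ν, l) - h i j hij (a j (l + 1)) (ν, l) := by abel
        rw [e2]; exact e1
      · have h1 : a i j (ν, l) = 0 := by
          by_contra hne
          exact hlγ (ha.2.1 i j hij hj (ν, l) (Finsupp.mem_support_iff.2 hne)).2
        have h2 : y i (ν, l) = 0 := by rw [ycoe]; exact dif_neg fun hc => hlγ hc.2
        have h3 : h i j hij (y j) (ν, l) = 0 :=
          hzero_aux hh hij (y j) ν l hlj fun p hp =>
            ((ysupp j p hp).2.trans_le (not_lt.1 hlγ)).ne
        rw [Finsupp.add_apply, Finsupp.sub_apply, h1, h2, h3, sub_zero, add_zero]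
  set b : ∀ i, Ordinal → GMod R T i := fun i j =>
    if hij : i < j ∧ j < γ then a i j - y i + h i j hij.1 (y j) else 0 with hbdef
  have bdef : ∀ i j (hij : i < j) (hj : j < γ),
      b i j = a i j - y i + h i j hij (y j) := fun i j hij hj => dif_pos ⟨hij, hj⟩
  refine ⟨b, ⟨fun i j hn => dif_neg hn, ?_, ?_⟩, ⟨?_, y, fun i _ p hp => ysupp i p hp, ?_⟩, ?_⟩
  · -- support condition for b
    intro i j hij hj p hp
    have hp2 : p.2 = j := by
      by_contra hne
      have hzv := key i j hij hj p.1 p.2 hne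
      rw [← bdef i j hij hj] at hzv
      exact (Finsupp.mem_support_iff.1 hp) hzv
    rw [hp2]; exact ⟨hij, hj⟩
  · -- coherence of b
    intro i j k hij hjk hk
    rw [bdef i k (hij.trans hjk) hk, bdef i j hij (hjk.trans hk), bdef j k hjk hk,
      map_add, map_sub, hcomp_aux hres hh hij hjk (y k), ha.2.2 i j k hij hjk hk]
    abel
  · -- a - b vanishes outside Ind
    intro i j hn
    have hab : (a - b) i j = a i j - b i j := rfl
    have hb0 : b i j = 0 := dif_neg hn
    rw [hab, ha.1 i j hn, hb0, sub_zero]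
  · -- a - b is the factor determined by y
    intro i j hij hj
    have hab : (a - b) i j = a i j - b i j := rfl
    rw [hab, bdef i j hij hj]
    abel
  · -- the support property of b
    intro i hi
    refine ⟨i + 1, hltsucc i, hsucclt i hi, fun j hji hj => ?_⟩
    have hij : i < j := (hltsucc i).trans_le hji
    constructor
    · intro ν l hlj
      have hzv := key i j hij hj ν l hlj.ne
      rwa [← bdef i j hij hj] at hzv
    · intro ν l hlj
      have hzv := key i j hij hj ν l hlj
      rwa [← bdef i j hij hj] at hzv

end Paper644
end

section
/- Let b ∈ Gr(A) in the tree-based inverse γ-system, and let I ⊆ {(i,j) : b_{i,j} is supported only on generators x_{ν,l} with l = j}. Then for all (i,j) ∈ I, ν ∈ T_i, and k ∈ I_i ∩ I_j: the coefficient b^{i,j}_{ν,j} equals Σ_{η ∈ T_j, η ≥ ν} b^{j,k}_{η,k}, which also equals b^{i,k}_{ν,k}. -/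
namespace Paper644

open Finsupp

variable (R : Type) [Ring R] (T : Ordinal → Type)

theorem stmt14 (γ : Ordinal) (hγ : Order.IsSuccLimit γ)
    (res : ∀ i j, i < j → T j → T i) (hres : resCoh T res) (hT : treeHeight T γ)
    (h : ∀ i j, i < j → GMod R T j →ₗ[R] GMod R T i) (hh : hdef R T res h)
    (b : ∀ i, Ordinal → GMod R T i) (hb : b ∈ Gr R T γ h)
    (I : Set (Ordinal × Ordinal)) (hIInd : I ⊆ Ind γ)
    (hI : ∀ p ∈ I, ∀ (ν : T p.1) (l : Ordinal), l ≠ p.2 → (b p.1 p.2) (ν, l) = 0) :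
    ∀ i j k, (i, j) ∈ I → (i, k) ∈ I → (j, k) ∈ I → ∀ (hij : i < j) (ν : T i),
      ((b i j) (ν, j) = ∑ᶠ (η : T j) (_ : res i j hij η = ν), (b j k) (η, k)) ∧
      ((b i j) (ν, j) = (b i k) (ν, k)) := by
  classical
  obtain ⟨hb0, hbsupp, hbcoh⟩ := hb
  intro i j k hijI hikI hjkI hij ν
  obtain ⟨hjk, hkγ⟩ := hIInd hjkI
  have hjne : j ≠ k := hjk.ne
  set c : T j → R := fun η => b j k (η, k) with hc
  set S : Finset (T j) := (b j k).support.image Prod.fst with hS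
  have hmemS : ∀ η : T j, c η ≠ 0 → η ∈ S := by
    intro η h0
    exact Finset.mem_image.mpr ⟨(η, k), Finsupp.mem_support_iff.mpr h0, rfl⟩
  have hbjk : b j k = ∑ η ∈ S, Finsupp.single (η, k) (c η) := by
    ext p
    obtain ⟨η, l⟩ := p
    rw [Finsupp.finset_sum_apply]
    by_cases hl : l = k
    · rw [hl]
      by_cases hη : η ∈ S
      · rw [Finset.sum_eq_single η]
        · simp [hc]
        · intro η' _ hne
          simp [Finsupp.single_apply, Prod.ext_iff, hne]
        · intro hcon; exact absurd hη hcon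
      · have h0 : c η = 0 := by
          by_contra h0; exact hη (hmemS η h0)
        rw [show b j k (η, k) = c η from rfl, h0]
        refine (Finset.sum_eq_zero ?_).symm
        intro η' hη'
        have hne : η' ≠ η := fun he => hη (he ▸ hη')
        simp [Finsupp.single_apply, Prod.ext_iff, hne]
    · rw [hI (j, k) hjkI η l hl]
      refine (Finset.sum_eq_zero ?_).symm
      intro η' _
      simp only [Finsupp.single_apply, Prod.ext_iff]
      rw [if_neg]
      rintro ⟨-, he⟩
      exact hl he.symm
  have hh' : h i j hij (b j k)
      = ∑ η ∈ S, c η • (Finsupp.single (res i j hij η, k) (1 : R)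
          - Finsupp.single (res i j hij η, j) 1) := by
    rw [hbjk, map_sum]
    refine Finset.sum_congr rfl fun η _ => ?_
    have hsingle : Finsupp.single (η, k) (c η) = c η • Finsupp.single (η, k) (1 : R) := by
      rw [Finsupp.smul_single, smul_eq_mul, mul_one]
    rw [hsingle, map_smul, hh i j hij η k]
  have happ : ∀ m : Ordinal, (h i j hij (b j k)) (ν, m) =
      ∑ η ∈ S, c η * ((if res i j hij η = ν ∧ k = m then (1 : R) else 0)
        - (if res i j hij η = ν ∧ j = m then 1 else 0)) := by
    intro m
    rw [hh', Finsupp.finset_sum_apply]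
    refine Finset.sum_congr rfl fun η _ => ?_
    rw [Finsupp.smul_apply, Finsupp.sub_apply, Finsupp.single_apply, Finsupp.single_apply,
      smul_eq_mul]
    congr 1 <;> simp [Prod.ext_iff]
  set F : R := ∑ η ∈ S.filter (fun η => res i j hij η = ν), c η with hF
  have hFk : (h i j hij (b j k)) (ν, k) = F := by
    rw [happ k, hF, Finset.sum_filter]
    refine Finset.sum_congr rfl fun η _ => ?_
    by_cases hr : res i j hij η = ν <;> simp [hr, hjne]
  have hFj : (h i j hij (b j k)) (ν, j) = -F := by
    rw [happ j, hF, Finset.sum_filter, ← Finset.sum_neg_distrib]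
    refine Finset.sum_congr rfl fun η _ => ?_
    by_cases hr : res i j hij η = ν <;> simp [hr, hjne.symm, mul_sub]
  have hcoh := hbcoh i j k hij hjk hkγ
  have hikj : b i k (ν, j) = 0 := hI (i, k) hikI ν j hjne
  have hijk : b i j (ν, k) = 0 := hI (i, j) hijI ν k (Ne.symm hjne)
  have e1 : b i j (ν, j) = F := by
    have := congrArg (fun f : GMod R T i => f (ν, j)) hcoh
    simp only [Finsupp.add_apply] at this
    rw [hikj, hFj] at this
    symm at this
    rwa [add_neg_eq_zero] at this
  have e2 : b i k (ν, k) = F := by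
    have := congrArg (fun f : GMod R T i => f (ν, k)) hcoh
    simp only [Finsupp.add_apply] at this
    rw [hijk, hFk, zero_add] at this
    exact this
  have efin : (∑ᶠ (η : T j) (_ : res i j hij η = ν), (b j k) (η, k)) = F := by
    have hrw : ∀ η : T j, (∑ᶠ _ : res i j hij η = ν, (b j k) (η, k))
        = if res i j hij η = ν then c η else 0 := by
      intro η
      split_ifs with hr
      · rw [finsum_eq_if, if_pos hr]
      · rw [finsum_eq_if, if_neg hr]
    rw [finsum_congr hrw]
    have hsupp : (Function.support fun η : T j =>
        if res i j hij η = ν then c η else 0) ⊆ ↑S := by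
      intro η hη
      simp only [Function.mem_support] at hη
      by_cases hr : res i j hij η = ν
      · rw [if_pos hr] at hη; exact hmemS η hη
      · rw [if_neg hr] at hη; exact absurd rfl hη
    rw [finsum_eq_finset_sum_of_support_subset _ hsupp, hF, Finset.sum_filter]
  exact ⟨e1.trans efin.symm, e1.trans e2.symm⟩

end Paper644
end

section
/- Suppose γ has uncountable cofinality, b ∈ Gr(A) \ Fact(A) in the tree-based inverse γ-system, and I ⊆ Ind(γ) is eventually coherent with b_{i,j} supported only on generators x_{ν,l} with l = j for all (i,j) ∈ I. Then there is an eventually coherent J ⊆ I with b_{i,j} ≠ 0 for all (i,j) ∈ J. -/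
namespace Paper644

open Finsupp

variable (R : Type) [Ring R] (T : Ordinal → Type)

section Aux
universe u
variable {R : Type} [Ring R] {T : Ordinal.{u} → Type}

lemma lemA (res : ∀ i j, i < j → T j → T i)
    (h : ∀ i j, i < j → GMod R T j →ₗ[R] GMod R T i)
    (hh : hdef R T res h)
    {i j k : Ordinal.{u}} (hij : i < j) (hjk : j ≠ k)
    (a : GMod R T j) (ha : ∀ p ∈ a.support, p.2 = k) (μ : T i) :
    (h i j hij a) (μ, j) + (h i j hij a) (μ, k) = 0 := by
  classical
  set F : GMod R T j →ₗ[R] R :=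
    (Finsupp.lapply (μ, j) + Finsupp.lapply (μ, k)).comp (h i j hij) with hF
  have : (h i j hij a) (μ, j) + (h i j hij a) (μ, k) = F a := rfl
  rw [this]
  have ha' : a = a.sum (fun p r => Finsupp.single p r) := (Finsupp.sum_single a).symm
  rw [ha', map_finsuppSum]
  rw [Finsupp.sum]; apply Finset.sum_eq_zero
  intro p hp
  obtain ⟨ν, l⟩ := p
  have hl : k = l := (ha _ hp).symm
  subst hl
  have hs : (Finsupp.single (ν, k) (a (ν,k)) : GMod R T j)
      = a (ν,k) • Finsupp.single (ν,k) (1:R) := by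
    rw [Finsupp.smul_single, smul_eq_mul, mul_one]
  rw [hs, map_smul, hF]
  simp only [LinearMap.comp_apply, LinearMap.add_apply, Finsupp.lapply_apply,
    hh i j hij ν k, Finsupp.sub_apply, Finsupp.single_apply, Prod.mk.injEq]
  simp [hjk, Ne.symm hjk]


lemma claim {γ : Ordinal.{u}} (res : ∀ i j, i < j → T j → T i)
    (h : ∀ i j, i < j → GMod R T j →ₗ[R] GMod R T i)
    (hh : hdef R T res h)
    {b : ∀ i, Ordinal → GMod R T i} (hb : b ∈ Gr R T γ h)
    {I : Set (Ordinal × Ordinal)} (hIInd : I ⊆ Ind γ)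
    (hI : ∀ p ∈ I, ∀ (ν : T p.1) (l : Ordinal), l ≠ p.2 → (b p.1 p.2) (ν, l) = 0)
    {i j k : Ordinal.{u}} (hijI : (i,j) ∈ I) (hikI : (i,k) ∈ I) (hjkI : (j,k) ∈ I) :
    b i j = 0 ↔ b i k = 0 := by
  classical
  have hij : i < j := (hIInd hijI).1
  have hjk : j < k := (hIInd hjkI).1
  have hkγ : k < γ := (hIInd hjkI).2
  have hco : b i k = b i j + h i j hij (b j k) := hb.2.2 i j k hij hjk hkγ
  have hsup : ∀ p ∈ (b j k).support, p.2 = k := by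
    intro p hp
    by_contra hne
    exact (Finsupp.mem_support_iff.mp hp) (hI (j,k) hjkI p.1 p.2 hne)
  have key : ∀ μ : T i, b i j (μ, j) = b i k (μ, k) := by
    intro μ
    have hA := lemA res h hh hij hjk.ne (b j k) hsup μ
    have z1 : b i k (μ, j) = 0 := hI (i,k) hikI μ j hjk.ne
    have z2 : b i j (μ, k) = 0 := hI (i,j) hijI μ k hjk.ne'
    have e1 : b i k (μ, j) = b i j (μ, j) + (h i j hij (b j k)) (μ, j) := by
      rw [hco]; rfl
    have e2 : b i k (μ, k) = b i j (μ, k) + (h i j hij (b j k)) (μ, k) := by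
      rw [hco]; rfl
    rw [z1] at e1
    rw [z2, zero_add] at e2
    have : b i j (μ, j) = -((h i j hij (b j k)) (μ, j)) :=
      eq_neg_of_add_eq_zero_left e1.symm
    rw [this, e2, neg_eq_iff_add_eq_zero]
    exact hA
  constructor
  · intro h0
    ext p
    obtain ⟨μ, l⟩ := p
    by_cases hl : l = k
    · subst hl
      rw [← key μ, h0]; rfl
    · exact hI (i,k) hikI μ l hl
  · intro h0
    ext p
    obtain ⟨μ, l⟩ := p
    by_cases hl : l = j
    · subst hl
      rw [key μ, h0]; rfl
    · exact hI (i,j) hijI μ l hl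

lemma maxlt {a b γ : Ordinal.{u}} (ha : a < γ) (hb : b < γ) : max a b < γ := max_lt ha hb

lemma factOf {γ : Ordinal.{u}} (hγ : Order.IsSuccLimit γ)
    (h : ∀ i j, i < j → GMod R T j →ₗ[R] GMod R T i)
    {b : ∀ i, Ordinal → GMod R T i} (hb : b ∈ Gr R T γ h)
    {Z : Set (Ordinal × Ordinal)} (hZInd : Z ⊆ Ind γ) (hecZ : EvCoh γ Z)
    (hz : ∀ p ∈ Z, b p.1 p.2 = 0) : b ∈ Fact R T γ h := by
  classical
  have hdomγ : ∀ x ∈ dom Z, x < γ := by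
    rintro x ⟨y, hy⟩
    exact (hZInd hy).1.trans (hZInd hy).2
  have hch : ∀ i : Ordinal, ∃ jx, i < γ → jx ∈ dom Z ∧ i < jx ∧ jx < γ := by
    intro i
    by_cases hi : i < γ
    · obtain ⟨x, hx, hix⟩ := hecZ.1 (Order.succ i) (hγ.succ_lt hi)
      exact ⟨x, fun _ => ⟨hx, (Order.lt_succ i).trans_le hix, hdomγ x hx⟩⟩
    · exact ⟨0, fun hi' => absurd hi' hi⟩
  choose jf hjf using hch
  refine ⟨hb.1, fun i => b i (jf i), ?_, ?_⟩
  · intro i hi p hp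
    exact hb.2.1 i (jf i) (hjf i hi).2.1 (hjf i hi).2.2 p hp
  · intro i j hij hjγ
    have hiγ : i < γ := hij.trans hjγ
    obtain ⟨hdi, hii, hiγ'⟩ := hjf i hiγ
    obtain ⟨hdj, hjj, hjγ'⟩ := hjf j hjγ
    obtain ⟨β1, hβ1γ, hβ1⟩ := hecZ.2 (jf i) hdi
    obtain ⟨β2, hβ2γ, hβ2⟩ := hecZ.2 (jf j) hdj
    obtain ⟨k, hk, hβk⟩ := hecZ.1 (max (max β1 β2) (Order.succ j))
      (maxlt (maxlt hβ1γ hβ2γ) (hγ.succ_lt hjγ))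
    have hk1 : (jf i, k) ∈ Z := by
      by_contra hc
      exact absurd (hβ1 k ⟨hk, hc⟩)
        (not_lt.2 (le_trans (le_max_left β1 β2) (le_trans (le_max_left _ _) hβk)))
    have hk2 : (jf j, k) ∈ Z := by
      by_contra hc
      exact absurd (hβ2 k ⟨hk, hc⟩)
        (not_lt.2 (le_trans (le_max_right β1 β2) (le_trans (le_max_left _ _) hβk)))
    have hjk : j < k := (Order.lt_succ j).trans_le ((le_max_right _ _).trans hβk)
    have hkγ : k < γ := (hZInd hk1).2
    have e1 : b i k = b i j + h i j hij (b j k) := hb.2.2 i j k hij hjk hkγ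
    have e2 : b i k = b i (jf i) + h i (jf i) hii (b (jf i) k) :=
      hb.2.2 i (jf i) k hii (hZInd hk1).1 hkγ
    have e3 : b j k = b j (jf j) + h j (jf j) hjj (b (jf j) k) :=
      hb.2.2 j (jf j) k hjj (hZInd hk2).1 hkγ
    rw [hz _ hk1, map_zero, add_zero] at e2
    rw [hz _ hk2, map_zero, add_zero] at e3
    show b i j = b i (jf i) - h i j hij (b j (jf j))
    rw [← e3, ← e2, e1]
    abel

/-- For `S ⊆ dom I` of finitely many elements... helper: find an element of
`dom I` above `β` lying in the fibers of three given dom-elements. -/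
lemma cofib3 {γ : Ordinal.{u}} (hγ : Order.IsSuccLimit γ) {I : Set (Ordinal × Ordinal)}
    (hec : EvCoh γ I) {a b c β : Ordinal.{u}} (ha : a ∈ dom I) (hb : b ∈ dom I)
    (hc : c ∈ dom I) (hβ : β < γ) :
    ∃ k ∈ dom I, β ≤ k ∧ (a, k) ∈ I ∧ (b, k) ∈ I ∧ (c, k) ∈ I := by
  obtain ⟨β1, hβ1γ, hβ1⟩ := hec.2 a ha
  obtain ⟨β2, hβ2γ, hβ2⟩ := hec.2 b hb
  obtain ⟨β3, hβ3γ, hβ3⟩ := hec.2 c hc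
  obtain ⟨k, hk, hβk⟩ := hec.1 (max (max β1 β2) (max β3 β))
    (maxlt (maxlt hβ1γ hβ2γ) (maxlt hβ3γ hβ))
  refine ⟨k, hk, le_trans ((le_max_right β3 β).trans (le_max_right _ _)) hβk, ?_, ?_, ?_⟩
  · by_contra hcon
    exact absurd (hβ1 k ⟨hk, hcon⟩)
      (not_lt.2 (((le_max_left β1 β2).trans (le_max_left _ _)).trans hβk))
  · by_contra hcon
    exact absurd (hβ2 k ⟨hk, hcon⟩)
      (not_lt.2 (((le_max_right β1 β2).trans (le_max_left _ _)).trans hβk))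
  · by_contra hcon
    exact absurd (hβ3 k ⟨hk, hcon⟩)
      (not_lt.2 (((le_max_left β3 β).trans (le_max_right _ _)).trans hβk))

lemma constancy {γ : Ordinal.{u}} (hγ : Order.IsSuccLimit γ) (res : ∀ i j, i < j → T j → T i)
    (h : ∀ i j, i < j → GMod R T j →ₗ[R] GMod R T i) (hh : hdef R T res h)
    {b : ∀ i, Ordinal → GMod R T i} (hb : b ∈ Gr R T γ h)
    {I : Set (Ordinal × Ordinal)} (hIInd : I ⊆ Ind γ) (hec : EvCoh γ I)
    (hI : ∀ p ∈ I, ∀ (ν : T p.1) (l : Ordinal), l ≠ p.2 → (b p.1 p.2) (ν, l) = 0)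
    {i j k : Ordinal.{u}} (hi : i ∈ dom I) (hj : j ∈ dom I) (hk : k ∈ dom I)
    (hijI : (i,j) ∈ I) (hikI : (i,k) ∈ I) :
    b i j = 0 ↔ b i k = 0 := by
  obtain ⟨k', _, _, hik', hjk', hkk'⟩ := cofib3 hγ hec hi hj hk hγ.pos
  rw [claim res h hh hb hIInd hI hijI hik' hjk',
    ← claim res h hh hb hIInd hI hikI hik' hkk']
end Aux

theorem stmt15 (γ : Ordinal) (hγ : Order.IsSuccLimit γ) (hcof : Cardinal.aleph0 < γ.cof)
    (res : ∀ i j, i < j → T j → T i) (hres : resCoh T res) (hT : treeHeight T γ)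
    (h : ∀ i j, i < j → GMod R T j →ₗ[R] GMod R T i) (hh : hdef R T res h)
    (b : ∀ i, Ordinal → GMod R T i) (hb : b ∈ Gr R T γ h) (hnb : b ∉ Fact R T γ h)
    (I : Set (Ordinal × Ordinal)) (hIInd : I ⊆ Ind γ) (hec : EvCoh γ I)
    (hI : ∀ p ∈ I, ∀ (ν : T p.1) (l : Ordinal), l ≠ p.2 → (b p.1 p.2) (ν, l) = 0) :
    ∃ J ⊆ I, EvCoh γ J ∧ ∀ p ∈ J, b p.1 p.2 ≠ 0 := by
  classical
  set D0 : Set Ordinal := {i | i ∈ dom I ∧ ∀ j, (i,j) ∈ I → j ∈ dom I → b i j = 0}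
    with hD0def
  by_cases hD0 : unbddIn γ D0
  · -- in this case b ∈ Fact, contradiction
    exfalso
    apply hnb
    set Z : Set (Ordinal × Ordinal) := {p | p ∈ I ∧ p.1 ∈ D0 ∧ p.2 ∈ dom I} with hZdef
    have hZI : Z ⊆ I := fun p hp => hp.1
    refine factOf hγ h hb (fun p hp => hIInd (hZI hp)) ⟨?_, ?_⟩ ?_
    · intro β hβ
      obtain ⟨i, hiD0, hβi⟩ := hD0 β hβ
      obtain ⟨j, hjdom, _, hij, -, -⟩ := cofib3 hγ hec hiD0.1 hiD0.1 hiD0.1 hγ.pos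
      exact ⟨i, ⟨j, hij, hiD0, hjdom⟩, hβi⟩
    · rintro i ⟨j0, hij0I, hiD0, hj0dom⟩
      obtain ⟨β1, hβ1γ, hβ1⟩ := hec.2 i hiD0.1
      refine ⟨β1, hβ1γ, ?_⟩
      rintro x ⟨⟨jx, hjxI, hxD0, hjxdom⟩, hxfib⟩
      by_contra hc
      push_neg at hc
      refine hxfib (⟨?_, hiD0, hxD0.1⟩ : (i, x) ∈ Z)
      by_contra hixI
      exact absurd (hβ1 x ⟨hxD0.1, hixI⟩) (not_lt.2 hc)
    · rintro ⟨i, j⟩ ⟨hpI, hiD0, hjdom⟩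
      exact hiD0.2 j hpI hjdom
  · rw [unbddIn] at hD0
    push_neg at hD0
    obtain ⟨β0, hβ0γ, hβ0⟩ := hD0
    have hkey : ∀ i, i ∈ dom I → i ∉ D0 → ∀ j, (i,j) ∈ I → j ∈ dom I → b i j ≠ 0 := by
      intro i hidom hiD0 j hijI hjdom
      have : ∃ j0, (i, j0) ∈ I ∧ j0 ∈ dom I ∧ b i j0 ≠ 0 := by
        by_contra hc
        push_neg at hc
        exact hiD0 ⟨hidom, hc⟩
      obtain ⟨j0, hij0I, hj0dom, hbne⟩ := this
      intro hbz
      exact hbne ((constancy hγ res h hh hb hIInd hec hI hidom hj0dom hjdom hij0I hijI).2 hbz)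
    set J : Set (Ordinal × Ordinal) :=
      {p | p ∈ I ∧ (p.1 ∈ dom I ∧ p.1 ∉ D0) ∧ (p.2 ∈ dom I ∧ p.2 ∉ D0)} with hJdef
    have hnD0 : ∀ x, β0 ≤ x → x ∉ D0 := fun x hx hc => absurd (hβ0 x hc) (not_lt.2 hx)
    refine ⟨J, fun p hp => hp.1, ⟨?_, ?_⟩, ?_⟩
    · intro β hβ
      obtain ⟨i, hidom, hβi⟩ := hec.1 (max β β0) (maxlt hβ hβ0γ)
      have hiD0 : i ∉ D0 := hnD0 i ((le_max_right β β0).trans hβi)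
      obtain ⟨j, hjdom, hβ0j, hijI, -, -⟩ := cofib3 hγ hec hidom hidom hidom hβ0γ
      exact ⟨i, ⟨j, hijI, ⟨hidom, hiD0⟩, ⟨hjdom, hnD0 j hβ0j⟩⟩,
        (le_max_left β β0).trans hβi⟩
    · rintro i ⟨j0, hij0I, hiOK, hj0OK⟩
      obtain ⟨β1, hβ1γ, hβ1⟩ := hec.2 i hiOK.1
      refine ⟨β1, hβ1γ, ?_⟩
      rintro x ⟨⟨jx, hjxI, hxOK1, hxOK2⟩, hxfib⟩
      by_contra hc
      push_neg at hc
      refine hxfib (⟨?_, hiOK, hxOK1⟩ : (i, x) ∈ J)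
      by_contra hixI
      exact absurd (hβ1 x ⟨hxOK1.1, hixI⟩) (not_lt.2 hc)
    · rintro ⟨i, j⟩ ⟨hpI, hiOK, hjOK⟩
      exact hkey i hiOK.1 hiOK.2 j hpI hjOK.1

end Paper644
end

section
/- Suppose γ has uncountable cofinality, b ∈ Gr(A) in the tree-based inverse γ-system, and J ⊆ Ind(γ) is eventually coherent with b_{i,j} nonzero and supported only on generators x_{ν,l} with l = j for all (i,j) ∈ J. Then there exist n* < ω and an eventually coherent K ⊆ J such that |supp(b_{i,j})| < n* for all (i,j) ∈ K. -/
namespace Paper644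

open Finsupp

variable (R : Type) [Ring R] (T : Ordinal → Type)

universe u

lemma hApply' {R : Type} [Ring R] {T : Ordinal.{u} → Type}
    (res : ∀ i j, i < j → T j → T i)
    (h : ∀ i j, i < j → ((T j × Ordinal.{u}) →₀ R) →ₗ[R] ((T i × Ordinal.{u}) →₀ R))
    (hh : ∀ i j (hij : i < j) (η : T j) (l : Ordinal.{u}),
      h i j hij (Finsupp.single (η, l) (1 : R)) =
        Finsupp.single (res i j hij η, l) (1 : R) -
          Finsupp.single (res i j hij η, j) (1 : R))
    {i j : Ordinal.{u}} (hij : i < j) (v : (T j × Ordinal.{u}) →₀ R)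
    (q : T i × Ordinal.{u}) :
    (h i j hij v) q = ∑ p ∈ v.support,
      v p * ((Finsupp.single (res i j hij p.1, p.2) (1:R)) q
        - (Finsupp.single (res i j hij p.1, j) (1:R)) q) := by
  conv_lhs => rw [← Finsupp.sum_single v]
  rw [map_finsuppSum, Finsupp.sum, Finsupp.finset_sum_apply]
  refine Finset.sum_congr rfl fun p _ => ?_
  obtain ⟨ν, l⟩ := p
  have e1 : Finsupp.single ((ν,l) : T j × Ordinal.{u}) (v (ν,l))
      = v (ν,l) • Finsupp.single (ν,l) (1:R) := by
    rw [Finsupp.smul_single', mul_one]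
  rw [e1, map_smul, hh i j hij ν l, Finsupp.smul_apply, Finsupp.sub_apply, smul_eq_mul]

lemma supp_card_le' {R : Type} [Ring R] {T : Ordinal.{u} → Type}
    (res : ∀ i j, i < j → T j → T i)
    (h : ∀ i j, i < j → ((T j × Ordinal.{u}) →₀ R) →ₗ[R] ((T i × Ordinal.{u}) →₀ R))
    (hh : ∀ i j (hij : i < j) (η : T j) (l : Ordinal.{u}),
      h i j hij (Finsupp.single (η, l) (1 : R)) =
        Finsupp.single (res i j hij η, l) (1 : R) -
          Finsupp.single (res i j hij η, j) (1 : R))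
    {i j k : Ordinal.{u}} (hij : i < j) (hjk : j < k)
    (bij bik : (T i × Ordinal.{u}) →₀ R) (bjk : (T j × Ordinal.{u}) →₀ R)
    (E : bik = bij + h i j hij bjk)
    (hbij : ∀ ν l, l ≠ j → bij (ν,l) = 0)
    (hbik : ∀ ν l, l ≠ k → bik (ν,l) = 0)
    (hbjk : ∀ ν l, l ≠ k → bjk (ν,l) = 0) :
    bij.support.card ≤ bjk.support.card ∧ bik.support.card ≤ bjk.support.card := by
  classical
  have hjk' : j ≠ k := ne_of_lt hjk
  have hsjk : ∀ p ∈ bjk.support, p.2 = k := by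
    intro p hp
    by_contra hne
    exact Finsupp.mem_support_iff.mp hp (hbjk p.1 p.2 hne)
  have Eq : ∀ q : T i × Ordinal.{u}, bik q = bij q + (h i j hij bjk) q := by
    intro q; rw [E, Finsupp.add_apply]
  constructor
  · calc bij.support.card
        ≤ (bjk.support.image (fun p : T j × Ordinal.{u} =>
            ((res i j hij p.1, j) : T i × Ordinal.{u}))).card := by
          apply Finset.card_le_card
          intro q hq
          have hq0 : bij q ≠ 0 := Finsupp.mem_support_iff.mp hq
          have hq2 : q.2 = j := by
            by_contra hne; exact hq0 (hbij q.1 q.2 hne)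
          have hik0 : bik q = 0 := hbik q.1 q.2 (by rw [hq2]; exact hjk')
          have hne : (h i j hij bjk) q ≠ 0 := by
            intro h0
            apply hq0
            have hEq := Eq q
            rw [hik0, h0, add_zero] at hEq
            exact hEq.symm
          rw [hApply' res h hh hij] at hne
          obtain ⟨p, hp, hterm⟩ := Finset.exists_ne_zero_of_sum_ne_zero hne
          have hp2 : p.2 = k := hsjk p hp
          have hc1 : ((res i j hij p.1, p.2) : T i × Ordinal.{u}) ≠ q := by
            intro hc
            have hsnd : p.2 = q.2 := congrArg Prod.snd hc
            rw [hp2, hq2] at hsnd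
            exact hjk' hsnd.symm
          have hc2 : ((res i j hij p.1, j) : T i × Ordinal.{u}) = q := by
            by_contra hc
            apply hterm
            rw [Finsupp.single_eq_of_ne' hc1, Finsupp.single_eq_of_ne' hc, sub_zero, mul_zero]
          exact Finset.mem_image.mpr ⟨p, hp, hc2⟩
      _ ≤ bjk.support.card := Finset.card_image_le
  · calc bik.support.card
        ≤ (bjk.support.image (fun p : T j × Ordinal.{u} =>
            ((res i j hij p.1, p.2) : T i × Ordinal.{u}))).card := by
          apply Finset.card_le_card
          intro q hq
          have hq0 : bik q ≠ 0 := Finsupp.mem_support_iff.mp hq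
          have hq2 : q.2 = k := by
            by_contra hne; exact hq0 (hbik q.1 q.2 hne)
          have hij0 : bij q = 0 := hbij q.1 q.2 (by rw [hq2]; exact (Ne.symm hjk'))
          have hne : (h i j hij bjk) q ≠ 0 := by
            intro h0
            apply hq0
            rw [Eq q, hij0, h0, add_zero]
          rw [hApply' res h hh hij] at hne
          obtain ⟨p, hp, hterm⟩ := Finset.exists_ne_zero_of_sum_ne_zero hne
          have hc2 : ((res i j hij p.1, j) : T i × Ordinal.{u}) ≠ q := by
            intro hc
            have hsnd : j = q.2 := congrArg Prod.snd hc
            rw [hq2] at hsnd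
            exact hjk' hsnd
          have hc1 : ((res i j hij p.1, p.2) : T i × Ordinal.{u}) = q := by
            by_contra hc
            apply hterm
            rw [Finsupp.single_eq_of_ne' hc, Finsupp.single_eq_of_ne' hc2, sub_zero, mul_zero]
          exact Finset.mem_image.mpr ⟨p, hp, hc1⟩
      _ ≤ bjk.support.card := Finset.card_image_le

lemma pigeon (γ : Ordinal.{u}) (hcof : Cardinal.aleph0 < γ.cof) (S : Set Ordinal.{u})
    (hS : unbddIn γ S) (g : Ordinal.{u} → ℕ) :
    ∃ n : ℕ, unbddIn γ {x | x ∈ S ∧ g x ≤ n} := by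
  by_contra hc
  push_neg at hc
  have hb : ∀ n : ℕ, ∃ β < γ, ∀ x ∈ S, g x ≤ n → x < β := by
    intro n
    have hn := hc n
    unfold unbddIn at hn
    push_neg at hn
    obtain ⟨β, hβ, hx⟩ := hn
    exact ⟨β, hβ, fun x hxS hg => hx x ⟨hxS, hg⟩⟩
  choose β hβγ hβ using hb
  have hsup : iSup β < γ :=
    Ordinal.iSup_lt_ord_lift (by simpa using hcof) hβγ
  obtain ⟨x, hxS, hx⟩ := hS _ hsup
  exact absurd (hβ (g x) x hxS le_rfl)
    (not_lt.mpr (le_trans (Ordinal.le_iSup β (g x)) hx))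


theorem stmt16 (γ : Ordinal) (hγ : Order.IsSuccLimit γ) (hcof : Cardinal.aleph0 < γ.cof)
    (res : ∀ i j, i < j → T j → T i) (hres : resCoh T res) (hT : treeHeight T γ)
    (h : ∀ i j, i < j → GMod R T j →ₗ[R] GMod R T i) (hh : hdef R T res h)
    (b : ∀ i, Ordinal → GMod R T i) (hb : b ∈ Gr R T γ h)
    (J : Set (Ordinal × Ordinal)) (hJInd : J ⊆ Ind γ) (hec : EvCoh γ J)
    (hJ : ∀ p ∈ J, b p.1 p.2 ≠ 0 ∧
      ∀ (ν : T p.1) (l : Ordinal), l ≠ p.2 → (b p.1 p.2) (ν, l) = 0) :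
    ∃ n : ℕ, ∃ K ⊆ J, EvCoh γ K ∧ ∀ p ∈ K, (b p.1 p.2).support.card < n := by
  classical
  obtain ⟨hdomJ, hfibJ⟩ := hec
  have hJ' : ∀ p ∈ J, ∀ (ν : T p.1) (l : Ordinal), l ≠ p.2 → (b p.1 p.2) (ν, l) = 0 :=
    fun p hp => (hJ p hp).2
  obtain ⟨-, -, hcoh⟩ := hb
  have key : ∀ {i j k : Ordinal}, (i,j) ∈ J → (i,k) ∈ J → (j,k) ∈ J →
      (b i j).support.card ≤ (b j k).support.card ∧
      (b i k).support.card ≤ (b j k).support.card := by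
    intro i j k h1 h2 h3
    exact supp_card_le' res h (fun i j hij η l => hh i j hij η l)
      (hJInd h1).1 (hJInd h3).1 (b i j) (b i k) (b j k)
      (hcoh i j k (hJInd h1).1 (hJInd h3).1 (hJInd h3).2)
      (hJ' _ h1) (hJ' _ h2) (hJ' _ h3)
  have hdomlt : ∀ i ∈ dom J, i < γ := by
    rintro i ⟨j, hj⟩; exact lt_trans (hJInd hj).1 (hJInd hj).2
  have hδ : ∀ i ∈ dom J, ∃ d < γ, ∀ x ∈ dom J, d ≤ x → (i, x) ∈ J := by
    intro i hi
    obtain ⟨d, hdγ, hd⟩ := hfibJ i hi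
    refine ⟨d, hdγ, fun x hx hle => ?_⟩
    by_contra hnot
    exact absurd hle (not_le.mpr (hd x ⟨hx, hnot⟩))
  choose! δ hδγ hδJ using hδ
  have hW : ∀ j ∈ dom J, unbddIn γ {k | k ∈ dom J ∧ (j, k) ∈ J} := by
    intro j hj β hβ
    obtain ⟨x, hx, hxle⟩ := hdomJ (max β (δ j)) (max_lt hβ (hδγ j hj))
    exact ⟨x, ⟨hx, hδJ j hj x hx (le_trans (le_max_right _ _) hxle)⟩,
      le_trans (le_max_left _ _) hxle⟩
  have hV : ∀ j ∈ dom J, ∃ n : ℕ,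
      unbddIn γ {k | (k ∈ dom J ∧ (j,k) ∈ J) ∧ (b j k).support.card ≤ n} := by
    intro j hj
    exact pigeon γ hcof _ (hW j hj) (fun k => (b j k).support.card)
  have huni : ∃ n : ℕ, ∀ j ∈ dom J,
      unbddIn γ {k | (k ∈ dom J ∧ (j,k) ∈ J) ∧ (b j k).support.card ≤ n} := by
    by_contra hc
    push_neg at hc
    have hc' : ∀ n : ℕ, ∃ j ∈ dom J, ∃ β < γ,
        ∀ k, (k ∈ dom J ∧ (j,k) ∈ J) → (b j k).support.card ≤ n → k < β := by
      intro n
      obtain ⟨j, hj, hnb⟩ := hc n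
      unfold unbddIn at hnb; push_neg at hnb
      obtain ⟨β, hβγ, hβ⟩ := hnb
      exact ⟨j, hj, β, hβγ, fun k hk hle => hβ k ⟨hk, hle⟩⟩
    choose js hjs βs hβsγ hβs using hc'
    set g : ℕ → Ordinal := fun n => max (βs n) (δ (js n)) with hg_def
    have hg : ∀ n, g n < γ := fun n => max_lt (hβsγ n) (hδγ _ (hjs n))
    have hsup : iSup g < γ := Ordinal.iSup_lt_ord_lift (by simpa using hcof) hg
    obtain ⟨j', hj', hj'ge⟩ := hdomJ _ hsup
    have hgle : ∀ n, g n ≤ j' := fun n => le_trans (Ordinal.le_iSup g n) hj'ge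
    obtain ⟨n₀, hn₀⟩ := hV j' hj'
    obtain ⟨k, ⟨⟨hkdom, hj'k⟩, hcard⟩, hkge⟩ := hn₀ (g n₀) (hg n₀)
    have h1 : (js n₀, j') ∈ J :=
      hδJ _ (hjs n₀) j' hj' (le_trans (le_max_right _ _) (hgle n₀))
    have h2 : (js n₀, k) ∈ J :=
      hδJ _ (hjs n₀) k hkdom (le_trans (le_max_right _ _) hkge)
    have hle2 := (key h1 h2 hj'k).2
    have hklt := hβs n₀ k ⟨hkdom, h2⟩ (le_trans hle2 hcard)
    exact absurd (le_trans (le_max_left _ _) hkge) (not_le.mpr hklt)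
  obtain ⟨nstar, hnstar⟩ := huni
  refine ⟨nstar + 1, {p | p ∈ J ∧ p.2 ∈ dom J ∧ (b p.1 p.2).support.card ≤ nstar},
    fun p hp => hp.1, ⟨?_, ?_⟩, fun p hp => Nat.lt_succ_of_le hp.2.2⟩
  · intro β hβ
    obtain ⟨i, hi, hile⟩ := hdomJ β hβ
    obtain ⟨k, ⟨⟨hkdom, hik⟩, hcard⟩, -⟩ := hnstar i hi 0 hγ.bot_lt
    exact ⟨i, ⟨k, hik, hkdom, hcard⟩, hile⟩
  · rintro i ⟨k0, hk0J, hk0dom, hk0card⟩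
    have hiJ : i ∈ dom J := ⟨k0, hk0J⟩
    refine ⟨δ i, hδγ i hiJ, ?_⟩
    rintro x ⟨hxK, hxnf⟩
    by_contra hxge
    push_neg at hxge
    obtain ⟨kx, hkxJ, hkxdom, hkxcard⟩ := hxK
    have hxJ : x ∈ dom J := ⟨kx, hkxJ⟩
    have hix : (i, x) ∈ J := hδJ i hiJ x hxJ hxge
    obtain ⟨k, ⟨⟨hkdom, hxk⟩, hcard⟩, hkge⟩ := hnstar x hxJ (δ i) (hδγ i hiJ)
    have hik : (i, k) ∈ J := hδJ i hiJ k hkdom hkge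
    have hle := (key hix hik hxk).1
    exact hxnf ⟨hix, hxJ, le_trans hle hcard⟩



end Paper644
end

section
/- Suppose the cofinality of γ exceeds max(ℵ₀, |R|), b ∈ Gr(A) in the tree-based inverse γ-system, and I is an eventually coherent subset of {(i,j) : b_{i,j} ≠ 0 and b_{i,j} is supported only on generators x_{ν,l} with l = j}. Then there exist a nonzero d ∈ R, a γ-branch t of T, and an eventually coherent J ⊆ I such that the coefficient of x_{t(i),j} in b_{i,j} equals d for every (i,j) ∈ J. In particular, T has a γ-branch. -/
namespace Paper644

open Finsupp

variable (R : Type) [Ring R] (T : Ordinal → Type)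

section AuxLemmas
variable {R} {T}

/-- The level-`k` slice of an element of `G_i`. -/
noncomputable def slice {i : Ordinal} (k : Ordinal) (g : GMod R T i) : T i →₀ R :=
  Finsupp.comapDomain (fun μ => (μ, k)) g
    (fun a _ b _ hab => congrArg Prod.fst hab)

@[simp] lemma slice_apply {i : Ordinal} (k : Ordinal) (g : GMod R T i) (μ : T i) :
    slice k g μ = g (μ, k) :=
  Finsupp.comapDomain_apply _ _ _ _

lemma slice_add {i : Ordinal} (k : Ordinal) (g g' : GMod R T i) :
    slice k (g + g') = slice k g + slice k g' := by
  ext μ; simp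

lemma slice_zero {i : Ordinal} (k : Ordinal) : slice k (0 : GMod R T i) = 0 := by
  ext μ; simp

lemma slice_single {i : Ordinal} (k : Ordinal) (η : T i) (l : Ordinal) (c : R) :
    slice k (Finsupp.single (η, l) c) = if l = k then Finsupp.single η c else 0 := by
  classical
  ext μ
  by_cases hl : l = k <;>
    simp [Finsupp.single_apply, Prod.ext_iff, hl, and_comm]

lemma slice_h (res : ∀ i j, i < j → T j → T i)
    (h : ∀ i j, i < j → GMod R T j →ₗ[R] GMod R T i) (hh : hdef R T res h)
    {i j : Ordinal} (hij : i < j) {k : Ordinal} (hkj : k ≠ j) (g : GMod R T j) :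
    slice k (h i j hij g) = Finsupp.mapDomain (res i j hij) (slice k g) := by
  classical
  induction g using Finsupp.induction with
  | zero => simp [slice_zero]
  | single_add p c g hp hc ih =>
    obtain ⟨η, l⟩ := p
    rw [map_add, slice_add, slice_add, Finsupp.mapDomain_add, ih]
    congr 1
    have h1 : (Finsupp.single ((η, l) : T j × Ordinal) c) = c • Finsupp.single (η, l) (1 : R) := by
      rw [Finsupp.smul_single, smul_eq_mul, mul_one]
    rw [slice_single]
    by_cases hl : l = k
    · subst hl
      rw [if_pos rfl, Finsupp.mapDomain_single, h1, map_smul, hh i j hij η l]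
      ext μ
      simp [Finsupp.single_apply, Prod.ext_iff, hkj.symm, smul_eq_mul]
    · rw [if_neg hl, Finsupp.mapDomain_zero, h1, map_smul, hh i j hij η l]
      ext μ
      simp [Finsupp.single_apply, Prod.ext_iff, hl, hkj.symm, smul_eq_mul]

lemma emb_slice {i mm : Ordinal} (g : GMod R T i) (hm : ∀ p ∈ g.support, p.2 = mm) :
    Finsupp.mapDomain (fun ν : T i => (ν, mm)) (slice mm g) = g := by
  ext ⟨ν, l⟩
  by_cases hl : l = mm
  · rw [show ((ν, l) : T i × Ordinal) = (fun ν : T i => (ν, mm)) ν from by rw [hl],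
      Finsupp.mapDomain_apply (fun a b hab => congrArg Prod.fst hab)]
    simp
  · rw [Finsupp.mapDomain_notin_range]
    · symm
      by_contra hne
      exact hl (hm (ν, l) (Finsupp.mem_support_iff.mpr hne))
    · rintro ⟨ν', hν'⟩
      exact hl (congrArg Prod.snd hν').symm

lemma slice_h_diag (res : ∀ i j, i < j → T j → T i)
    (h : ∀ i j, i < j → GMod R T j →ₗ[R] GMod R T i) (hh : hdef R T res h)
    {i j m : Ordinal} (hij : i < j) (hjm : j ≠ m) (s : T j →₀ R) :
    slice j (h i j hij (Finsupp.mapDomain (fun ν : T j => (ν, m)) s)) =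
      - Finsupp.mapDomain (res i j hij) s := by
  classical
  induction s using Finsupp.induction with
  | zero => simp [slice_zero]
  | single_add ν c s hν hc ih =>
    rw [Finsupp.mapDomain_add, map_add, slice_add, Finsupp.mapDomain_add, neg_add, ih]
    congr 1
    rw [Finsupp.mapDomain_single, Finsupp.mapDomain_single]
    have h1 : (Finsupp.single ((ν, m) : T j × Ordinal) c) = c • Finsupp.single (ν, m) (1 : R) := by
      rw [Finsupp.smul_single, smul_eq_mul, mul_one]
    rw [h1, map_smul, hh i j hij ν m]
    ext μ
    have hA : (Finsupp.single ((res i j hij ν, m) : T i × Ordinal) (1:R)) (μ, j) = 0 :=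
      Finsupp.single_eq_of_ne (fun hc2 => hjm (congrArg Prod.snd hc2))
    by_cases hr : res i j hij ν = μ
    · subst hr
      simp only [slice_apply, Finsupp.smul_apply, Finsupp.sub_apply, hA, Finsupp.neg_apply,
        Finsupp.single_eq_same, smul_eq_mul]
      simp
    · have hB : (Finsupp.single ((res i j hij ν, j) : T i × Ordinal) (1:R)) (μ, j) = 0 :=
        Finsupp.single_eq_of_ne (fun hc2 => hr (congrArg Prod.fst hc2).symm)
      simp only [slice_apply, Finsupp.smul_apply, Finsupp.sub_apply, hA, hB, Finsupp.neg_apply,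
        Finsupp.single_eq_of_ne (Ne.symm hr), smul_eq_mul]
      simp


lemma keyA {γ : Ordinal} (res : ∀ i j, i < j → T j → T i)
    (h : ∀ i j, i < j → GMod R T j →ₗ[R] GMod R T i) (hh : hdef R T res h)
    {b : ∀ i, Ordinal → GMod R T i}
    (hco : ∀ i j k (hij : i < j) (hjk : j < k), k < γ → b i k = b i j + h i j hij (b j k))
    {i j k : Ordinal} (hij : i < j) (hjk : j < k) (hk : k < γ)
    (hbij : ∀ ν l, l ≠ j → b i j (ν, l) = 0) :
    slice k (b i k) = Finsupp.mapDomain (res i j hij) (slice k (b j k)) := by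
  rw [hco i j k hij hjk hk, slice_add, slice_h res h hh hij (ne_of_gt hjk)]
  have h0 : slice k (b i j) = 0 := by
    ext μ; simp [hbij μ k (ne_of_gt hjk)]
  rw [h0, zero_add]

lemma keyB {γ : Ordinal} (res : ∀ i j, i < j → T j → T i)
    (h : ∀ i j, i < j → GMod R T j →ₗ[R] GMod R T i) (hh : hdef R T res h)
    {b : ∀ i, Ordinal → GMod R T i}
    (hco : ∀ i j k (hij : i < j) (hjk : j < k), k < γ → b i k = b i j + h i j hij (b j k))
    {i j m : Ordinal} (hij : i < j) (hjm : j < m) (hm : m < γ)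
    (hbij : ∀ ν l, l ≠ j → b i j (ν, l) = 0)
    (hbim : ∀ ν l, l ≠ m → b i m (ν, l) = 0)
    (hbjm : ∀ ν l, l ≠ m → b j m (ν, l) = 0) :
    slice j (b i j) = slice m (b i m) := by
  have hA : slice m (b i m) = Finsupp.mapDomain (res i j hij) (slice m (b j m)) :=
    keyA res h hh hco hij hjm hm hbij
  have hg : Finsupp.mapDomain (fun ν : T j => (ν, m)) (slice m (b j m)) = b j m :=
    emb_slice _ (fun p hp => by
      by_contra hne
      exact Finsupp.mem_support_iff.mp hp (hbjm p.1 p.2 hne))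
  have h1 : slice j (h i j hij (b j m)) =
      - Finsupp.mapDomain (res i j hij) (slice m (b j m)) := by
    conv_lhs => rw [← hg]
    exact slice_h_diag res h hh hij (ne_of_lt hjm) _
  have h0 : slice j (b i m) = 0 := by
    ext μ; simp [hbim μ j (ne_of_lt hjm)]
  have e := congrArg (slice j) (hco i j m hij hjm hm)
  rw [slice_add, h0, h1] at e
  have e2 : slice j (b i j) = Finsupp.mapDomain (res i j hij) (slice m (b j m)) := by
    have e' : slice j (b i j) + -Finsupp.mapDomain (res i j hij) (slice m (b j m)) = 0 := e.symm
    rw [← sub_eq_add_neg] at e'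
    exact sub_eq_zero.mp e'
  rw [e2, hA]

lemma pick3 {γ : Ordinal} {I : Set (Ordinal × Ordinal)} (hγ : Order.IsSuccLimit γ)
    (hIInd : I ⊆ Ind γ) (hec : EvCoh γ I)
    {i₁ i₂ i₃ : Ordinal} (h1 : i₁ ∈ dom I) (h2 : i₂ ∈ dom I) (h3 : i₃ ∈ dom I)
    {β : Ordinal} (hβ : β < γ) :
    ∃ m, m ∈ dom I ∧ β ≤ m ∧ (i₁, m) ∈ I ∧ (i₂, m) ∈ I ∧ (i₃, m) ∈ I := by
  obtain ⟨β₁, hβ₁, hb1⟩ := hec.2 i₁ h1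
  obtain ⟨β₂, hβ₂, hb2⟩ := hec.2 i₂ h2
  obtain ⟨β₃, hβ₃, hb3⟩ := hec.2 i₃ h3
  have hB : (β ⊔ β₁ ⊔ β₂ ⊔ β₃) < γ := max_lt (max_lt (max_lt hβ hβ₁) hβ₂) hβ₃
  obtain ⟨m, hm, hBm⟩ := hec.1 _ hB
  have hf : ∀ (i' : Ordinal) (βi : Ordinal), (∀ x ∈ dom I \ fib I i', x < βi) →
      βi ≤ β ⊔ β₁ ⊔ β₂ ⊔ β₃ → (i', m) ∈ I := by
    intro i' βi hbi hle
    by_contra hn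
    exact absurd (le_trans hle hBm) (not_le.mpr (hbi m ⟨hm, hn⟩))
  refine ⟨m, hm, le_trans (le_sup_left.trans (le_sup_left.trans le_sup_left)) hBm,
    hf i₁ β₁ hb1 (le_sup_right.trans (le_sup_left.trans le_sup_left)),
    hf i₂ β₂ hb2 (le_sup_right.trans le_sup_left),
    hf i₃ β₃ hb3 le_sup_right⟩


end AuxLemmas

theorem stmt17 (γ : Ordinal) (hγ : Order.IsSuccLimit γ)
    (hcof : max Cardinal.aleph0 (Cardinal.mk R) < γ.cof)
    (res : ∀ i j, i < j → T j → T i) (hres : resCoh T res) (hT : treeHeight T γ)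
    (h : ∀ i j, i < j → GMod R T j →ₗ[R] GMod R T i) (hh : hdef R T res h)
    (b : ∀ i, Ordinal → GMod R T i) (hb : b ∈ Gr R T γ h)
    (I : Set (Ordinal × Ordinal)) (hIInd : I ⊆ Ind γ) (hec : EvCoh γ I)
    (hI : ∀ p ∈ I, b p.1 p.2 ≠ 0 ∧
      ∀ (ν : T p.1) (l : Ordinal), l ≠ p.2 → (b p.1 p.2) (ν, l) = 0) :
    ∃ d : R, d ≠ 0 ∧ ∃ t : ∀ i, i < γ → T i, IsBranch T γ res t ∧
      ∃ J ⊆ I, EvCoh γ J ∧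
        ∀ i j, (i, j) ∈ J → ∀ hi : i < γ, (b i j) (t i hi, j) = d := by
  classical
  obtain ⟨hbzero, hbsupp, hco⟩ := hb
  have hltγ : ∀ {i}, i ∈ dom I → i < γ := by
    rintro i ⟨j, hj⟩
    exact (hIInd hj).1.trans (hIInd hj).2
  have hIlvl : ∀ {i j}, (i, j) ∈ I → ∀ ν l, l ≠ j → b i j (ν, l) = 0 := fun hp => (hI _ hp).2
  -- choice of a witness fiber element for each i ∈ dom I
  have hjcex : ∀ i, ∃ m, i ∈ dom I → (m ∈ dom I ∧ (i, m) ∈ I) := by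
    intro i
    by_cases hi : i ∈ dom I
    · obtain ⟨m, hm, -, hm1, -, -⟩ := pick3 hγ hIInd hec hi hi hi hγ.pos
      exact ⟨m, fun _ => ⟨hm, hm1⟩⟩
    · exact ⟨0, fun hmem => absurd hmem hi⟩
  choose jc hjc using hjcex
  set fI : ∀ i, T i →₀ R := fun i => slice (jc i) (b i (jc i)) with hfIdef
  have welldef : ∀ i, ∀ (hi : i ∈ dom I), ∀ k, (i, k) ∈ I → k ∈ dom I →
      fI i = slice k (b i k) := by
    intro i hi k hik hkd
    obtain ⟨m, hmd, -, him, hjim, hkm⟩ :=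
      pick3 hγ hIInd hec hi ((hjc i hi).1) hkd hγ.pos
    have e1 : slice (jc i) (b i (jc i)) = slice m (b i m) :=
      keyB res h hh hco (hIInd (hjc i hi).2).1 (hIInd hjim).1 (hIInd him).2
        (hIlvl (hjc i hi).2) (hIlvl him) (hIlvl hjim)
    have e2 : slice k (b i k) = slice m (b i m) :=
      keyB res h hh hco (hIInd hik).1 (hIInd hkm).1 (hIInd him).2
        (hIlvl hik) (hIlvl him) (hIlvl hkm)
    exact e1.trans e2.symm
  have push : ∀ i i', ∀ (hi : i ∈ dom I) (hi' : i' ∈ dom I) (hii' : i < i'),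
      fI i = Finsupp.mapDomain (res i i' hii') (fI i') := by
    intro i i' hi hi' hii'
    obtain ⟨m, hmd, -, him, hi'm, -⟩ := pick3 hγ hIInd hec hi hi' hi' hγ.pos
    obtain ⟨k, hkd, hk1, hik, hi'k, -⟩ :=
      pick3 hγ hIInd hec hi hi' hi' (hγ.succ_lt (hltγ hmd))
    have hmk : m < k := Order.succ_le_iff.mp hk1
    have him' : i < m := (hIInd him).1
    have hi'm' : i' < m := (hIInd hi'm).1
    have hkγ : k < γ := (hIInd hik).2
    calc fI i = slice k (b i k) := welldef i hi k hik hkd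
      _ = Finsupp.mapDomain (res i m him') (slice k (b m k)) :=
          keyA res h hh hco him' hmk hkγ (hIlvl him)
      _ = Finsupp.mapDomain (res i i' hii')
            (Finsupp.mapDomain (res i' m hi'm') (slice k (b m k))) := by
          have hcomp : res i m him' = (res i i' hii') ∘ (res i' m hi'm') :=
            funext fun x => (hres i i' m hii' hi'm' x).symm
          rw [hcomp, Finsupp.mapDomain_comp]
      _ = Finsupp.mapDomain (res i i' hii') (slice k (b i' k)) := by
          rw [← keyA res h hh hco hi'm' hmk hkγ (hIlvl hi'm)]
      _ = Finsupp.mapDomain (res i i' hii') (fI i') := by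
          rw [← welldef i' hi' k hi'k hkd]
  have hmono : ∀ i i', i ∈ dom I → i' ∈ dom I → i ≤ i' →
      (fI i).support.card ≤ (fI i').support.card := by
    intro i i' hi hi' hle
    rcases lt_or_eq_of_le hle with hlt | rfl
    · rw [push i i' hi hi' hlt]
      exact le_trans (Finset.card_le_card Finsupp.mapDomain_support) Finset.card_image_le
    · exact le_rfl
  -- support sizes are bounded
  have hbdd : ∃ N, ∀ i ∈ dom I, (fI i).support.card ≤ N := by
    by_contra hN
    push_neg at hN
    choose g hg1 hg2 using hN
    have hgγ : ∀ n : ℕ, g n < γ := fun n => hltγ (hg1 n)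
    have hsup : iSup g < γ :=
      Ordinal.iSup_lt_of_lt_cof (by
        rw [Cardinal.mk_nat]
        exact lt_of_le_of_lt (le_max_left _ _) hcof) hgγ
    obtain ⟨i', hi', hsup'⟩ := hec.1 _ hsup
    have hle : ∀ n : ℕ, (fI (g n)).support.card ≤ (fI i').support.card := fun n =>
      hmono (g n) i' (hg1 n) hi' (le_trans (Ordinal.le_iSup g n) hsup')
    exact absurd (hle ((fI i').support.card))
      (not_le.mpr (hg2 ((fI i').support.card)))
  obtain ⟨N, hN⟩ := hbdd
  set S : Set ℕ := {n | ∃ i ∈ dom I, (fI i).support.card = n} with hSdef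
  have hSne : S.Nonempty := by
    obtain ⟨i, hi, -⟩ := hec.1 0 hγ.pos
    exact ⟨(fI i).support.card, i, hi, rfl⟩
  have hSbdd : BddAbove S := by
    refine ⟨N, ?_⟩
    rintro n ⟨i, hi, rfl⟩
    exact hN i hi
  obtain ⟨i₀, hi₀, hi₀card⟩ : ∃ i ∈ dom I, (fI i).support.card = sSup S :=
    Nat.sSup_mem hSne hSbdd
  have hmax : ∀ i ∈ dom I, (fI i).support.card ≤ sSup S := fun i hi =>
    le_csSup hSbdd ⟨i, hi, rfl⟩
  have htail : ∀ i, i ∈ dom I → i₀ ≤ i → (fI i).support.card = sSup S := fun i hi hle =>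
    le_antisymm (hmax i hi) (hi₀card ▸ hmono i₀ i hi₀ hi hle)
  -- bijectivity of res on supports along the tail
  have hbij : ∀ i i' (hi : i ∈ dom I) (hi' : i' ∈ dom I), i₀ ≤ i → ∀ (hii' : i < i'),
      ((fI i').support.image (res i i' hii') = (fI i).support ∧
       Set.InjOn (res i i' hii') ((fI i').support : Set (T i')) ∧
       ∀ ν ∈ (fI i').support, fI i (res i i' hii' ν) = fI i' ν) := by
    intro i i' hi hi' h0 hii'
    have hp := push i i' hi hi' hii'
    have hsub : (fI i).support ⊆ (fI i').support.image (res i i' hii') := by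
      rw [hp]; exact Finsupp.mapDomain_support
    have hc1 : (fI i).support.card = sSup S := htail i hi h0
    have hc2 : (fI i').support.card = sSup S := htail i' hi' (le_trans h0 hii'.le)
    have heq : (fI i).support = (fI i').support.image (res i i' hii') :=
      Finset.eq_of_subset_of_card_le hsub
        (le_trans Finset.card_image_le (by rw [hc1, hc2]))
    have hcardim : ((fI i').support.image (res i i' hii')).card = (fI i').support.card := by
      rw [← heq, hc1, hc2]
    have hinj : Set.InjOn (res i i' hii') ((fI i').support : Set (T i')) :=
      Finset.injOn_of_card_image_eq hcardim
    refine ⟨heq.symm, hinj, fun ν hν => ?_⟩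
    rw [hp]
    exact Finsupp.mapDomain_apply' ((fI i').support : Set (T i')) _ subset_rfl hinj
      (by exact_mod_cast hν)
  -- the witness point and value
  have hfI0ne : fI i₀ ≠ 0 := by
    intro h0
    have hIi₀ := (hjc i₀ hi₀).2
    apply (hI _ hIi₀).1
    ext p
    obtain ⟨ν, l⟩ := p
    by_cases hl : l = jc i₀
    · subst hl
      have : fI i₀ ν = 0 := by rw [h0]; rfl
      rw [hfIdef] at this
      simpa using this
    · simp [hIlvl hIi₀ ν l hl]
  obtain ⟨μ₁, hμ₁⟩ : ∃ μ, μ ∈ (fI i₀).support := by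
    rcases Finset.eq_empty_or_nonempty (fI i₀).support with he | hne
    · exact absurd (Finsupp.support_eq_empty.mp he) hfI0ne
    · exact hne
  set d := fI i₀ μ₁ with hd
  have hdne : d ≠ 0 := Finsupp.mem_support_iff.mp hμ₁
  -- the branch on the tail of dom I
  have ht'ex : ∀ i, ∀ (hi : i ∈ dom I) (h0 : i₀ < i),
      ∃ ν, ν ∈ (fI i).support ∧ res i₀ i h0 ν = μ₁ := by
    intro i hi h0
    obtain ⟨himg, -, -⟩ := hbij i₀ i hi₀ hi le_rfl h0
    have : μ₁ ∈ (fI i).support.image (res i₀ i h0) := by rw [himg]; exact hμ₁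
    obtain ⟨ν, hν, hν2⟩ := Finset.mem_image.mp this
    exact ⟨ν, hν, hν2⟩
  choose t' ht'supp ht'res using ht'ex
  have ht'uniq : ∀ i (hi : i ∈ dom I) (h0 : i₀ < i) (ν), ν ∈ (fI i).support →
      res i₀ i h0 ν = μ₁ → ν = t' i hi h0 := by
    intro i hi h0 ν hν hresν
    obtain ⟨-, hinj, -⟩ := hbij i₀ i hi₀ hi le_rfl h0
    exact hinj (by exact_mod_cast hν) (by exact_mod_cast ht'supp i hi h0)
      (hresν.trans (ht'res i hi h0).symm)
  have hcohD : ∀ i i' (hi : i ∈ dom I) (hi' : i' ∈ dom I) (h0 : i₀ < i) (h0' : i₀ < i')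
      (hii' : i < i'), res i i' hii' (t' i' hi' h0') = t' i hi h0 := by
    intro i i' hi hi' h0 h0' hii'
    refine ht'uniq i hi h0 _ ?_ ?_
    · obtain ⟨himg, -, -⟩ := hbij i i' hi hi' h0.le hii'
      rw [← himg]
      exact Finset.mem_image_of_mem _ (ht'supp i' hi' h0')
    · rw [hres i₀ i i' h0 hii' _]
      exact ht'res i' hi' h0'
  have hval : ∀ i (hi : i ∈ dom I) (h0 : i₀ < i), fI i (t' i hi h0) = d := by
    intro i hi h0
    obtain ⟨-, -, heval⟩ := hbij i₀ i hi₀ hi le_rfl h0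
    rw [← heval _ (ht'supp i hi h0), ht'res i hi h0]
  -- extend to a full branch
  have huex : ∀ i, i < γ → ∃ m, m ∈ dom I ∧ i < m ∧ i₀ < m := by
    intro i hi
    have hmax2 : (i ⊔ i₀) < γ := max_lt hi (hltγ hi₀)
    obtain ⟨m, hm, hm2⟩ := hec.1 (Order.succ (i ⊔ i₀)) (hγ.succ_lt hmax2)
    have h3 : i ⊔ i₀ < m := Order.succ_le_iff.mp hm2
    exact ⟨m, hm, lt_of_le_of_lt le_sup_left h3, lt_of_le_of_lt le_sup_right h3⟩
  choose u hud hui hui₀ using huex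
  set t : ∀ i, i < γ → T i := fun i hi =>
    res i (u i hi) (hui i hi) (t' (u i hi) (hud i hi) (hui₀ i hi)) with htdef
  have htconst : ∀ i (hi : i < γ) (m) (hm : m ∈ dom I) (him : i < m) (h0m : i₀ < m),
      t i hi = res i m him (t' m hm h0m) := by
    intro i hi m hm him h0m
    have hB : ((u i hi) ⊔ m) < γ := max_lt (hltγ (hud i hi)) (hltγ hm)
    obtain ⟨k, hk, hk2⟩ := hec.1 (Order.succ ((u i hi) ⊔ m)) (hγ.succ_lt hB)
    have hk2' : (u i hi) ⊔ m < k := Order.succ_le_iff.mp hk2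
    have hm1k : u i hi < k := lt_of_le_of_lt le_sup_left hk2'
    have hmk : m < k := lt_of_le_of_lt le_sup_right hk2'
    have h0k : i₀ < k := lt_trans h0m hmk
    have e1 : res (u i hi) k hm1k (t' k hk h0k) = t' (u i hi) (hud i hi) (hui₀ i hi) :=
      hcohD (u i hi) k (hud i hi) hk (hui₀ i hi) h0k hm1k
    have e2 : res m k hmk (t' k hk h0k) = t' m hm h0m :=
      hcohD m k hm hk h0m h0k hmk
    show res i (u i hi) (hui i hi) (t' (u i hi) (hud i hi) (hui₀ i hi)) =
      res i m him (t' m hm h0m)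
    rw [← e1, ← e2, hres i (u i hi) k (hui i hi) hm1k, hres i m k him hmk]
  have hbr : IsBranch T γ res t := by
    intro i j hij hj
    rw [htconst i (hij.trans hj) (u j hj) (hud j hj) (hij.trans (hui j hj)) (hui₀ j hj)]
    show res i j hij (res j (u j hj) (hui j hj) (t' (u j hj) (hud j hj) (hui₀ j hj))) = _
    exact hres i j (u j hj) hij (hui j hj) _
  have htD : ∀ i (hi : i ∈ dom I) (h0 : i₀ < i) (hiγ : i < γ), t i hiγ = t' i hi h0 := by
    intro i hi h0 hiγ
    rw [htconst i hiγ (u i hiγ) (hud i hiγ) (hui i hiγ) (hui₀ i hiγ)]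
    exact hcohD i (u i hiγ) hi (hud i hiγ) h0 (hui₀ i hiγ) (hui i hiγ)
  refine ⟨d, hdne, t, hbr, {p | p ∈ I ∧ p.2 ∈ dom I ∧ i₀ < p.1}, fun p hp => hp.1, ?_, ?_⟩
  · constructor
    · intro β hβ
      obtain ⟨i, hi, hi2⟩ := hec.1 (β ⊔ Order.succ i₀)
        (max_lt hβ (hγ.succ_lt (hltγ hi₀)))
      refine ⟨i, ⟨jc i, (hjc i hi).2, (hjc i hi).1,
        Order.succ_le_iff.mp (le_trans le_sup_right hi2)⟩,
        le_trans le_sup_left hi2⟩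
    · rintro i ⟨j, hjJ⟩
      have hiI : i ∈ dom I := ⟨j, hjJ.1⟩
      have h0i : i₀ < i := hjJ.2.2
      obtain ⟨β', hβ', hb'⟩ := hec.2 i hiI
      refine ⟨β', hβ', ?_⟩
      rintro x ⟨hx1, hx2⟩
      obtain ⟨k, hk⟩ := hx1
      have hxI : x ∈ dom I := ⟨k, hk.1⟩
      apply hb' x
      exact ⟨hxI, fun hfib => hx2 ⟨hfib, hxI, h0i⟩⟩
  · rintro i j ⟨hijI, hjd, h0i⟩ hi
    have hiI : i ∈ dom I := ⟨j, hijI⟩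
    have h1 : fI i = slice j (b i j) := welldef i hiI j hijI hjd
    have h2 : t i hi = t' i hiI h0i := htD i hiI h0i hi
    rw [h2, ← slice_apply j (b i j) (t' i hiI h0i), ← h1]
    exact hval i hiI h0i


end Paper644
end

section
/- Suppose γ has uncountable cofinality and T is a tree of height γ with no γ-branch. Then in the tree-based inverse γ-system of free R-modules, Gr(A) = Fact(A); equivalently the quotient Gr(A)/Fact(A) is trivial. -/
namespace Paper644

open Finsupp

variable (R : Type) [Ring R] (T : Ordinal → Type)

section Aux

variable {R : Type} [Ring R]

theorem mapDomain_apply_sum {α β : Type*} [DecidableEq β] (f : α → β) (v : α →₀ R) (b : β) :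
    Finsupp.mapDomain f v b = ∑ q ∈ v.support, if f q = b then v q else 0 := by
  rw [Finsupp.mapDomain, Finsupp.sum_apply]
  rw [Finsupp.sum]
  apply Finset.sum_congr rfl
  intro q _
  rw [Finsupp.single_apply]

theorem mapDomain_sub' {α β : Type*} (f : α → β) (g₁ g₂ : α →₀ R) :
    Finsupp.mapDomain f (g₁ - g₂) = Finsupp.mapDomain f g₁ - Finsupp.mapDomain f g₂ := by
  have := (Finsupp.mapDomain.addMonoidHom (M := R) f).map_sub g₁ g₂
  simpa [Finsupp.mapDomain.addMonoidHom] using this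

theorem mapDomain_sec_congr {A B : Type*} [DecidableEq A] [DecidableEq B]
    (f : A → B) (g₁ g₂ : (A × Ordinal) →₀ R)
    (l : Ordinal) (hg : ∀ q : A × Ordinal, q.2 = l → g₁ q = g₂ q) (b : B) :
    Finsupp.mapDomain (fun q : A × Ordinal => (f q.1, q.2)) g₁ (b, l) =
      Finsupp.mapDomain (fun q : A × Ordinal => (f q.1, q.2)) g₂ (b, l) := by
  rw [mapDomain_apply_sum, mapDomain_apply_sum]
  have e1 : ∑ q ∈ g₁.support, (if (f q.1, q.2) = (b, l) then g₁ q else 0) =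
      ∑ q ∈ g₁.support ∪ g₂.support, (if (f q.1, q.2) = (b, l) then g₁ q else 0) := by
    apply Finset.sum_subset Finset.subset_union_left
    intro x _ hx
    simp [Finsupp.notMem_support_iff.mp hx]
  have e2 : ∑ q ∈ g₂.support, (if (f q.1, q.2) = (b, l) then g₂ q else 0) =
      ∑ q ∈ g₁.support ∪ g₂.support, (if (f q.1, q.2) = (b, l) then g₂ q else 0) := by
    apply Finset.sum_subset Finset.subset_union_right
    intro x _ hx
    simp [Finsupp.notMem_support_iff.mp hx]
  rw [e1, e2]
  apply Finset.sum_congr rfl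
  intro q _
  by_cases hq : (f q.1, q.2) = (b, l)
  · rw [if_pos hq, if_pos hq, hg q (congrArg Prod.snd hq)]
  · rw [if_neg hq, if_neg hq]

variable {T : Ordinal → Type} {res : ∀ i j, i < j → T j → T i}
  {h : ∀ i j, i < j → GMod R T j →ₗ[R] GMod R T i}

theorem hRepr (hh : hdef R T res h) (i j : Ordinal) (hij : i < j) (g : GMod R T j) :
    h i j hij g
      = Finsupp.mapDomain (fun q : T j × Ordinal => (res i j hij q.1, q.2)) g
        - Finsupp.mapDomain (fun q : T j × Ordinal => (res i j hij q.1, j)) g := by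
  induction g using Finsupp.induction_linear with
  | zero => simp
  | add f g hf hg =>
      rw [map_add, hf, hg, Finsupp.mapDomain_add, Finsupp.mapDomain_add]; abel
  | single a b =>
      have e : (Finsupp.single a b : GMod R T j) = b • Finsupp.single a (1 : R) := by
        rw [Finsupp.smul_single', mul_one]
      rw [e, map_smul, hh i j hij a.1 a.2, ← e, Finsupp.mapDomain_single, Finsupp.mapDomain_single,
        smul_sub, Finsupp.smul_single', Finsupp.smul_single', mul_one]

theorem hmass (hh : hdef R T res h) (i j : Ordinal) (hij : i < j) (g : GMod R T j) :
    Finsupp.mapDomain Prod.fst (h i j hij g) = 0 := by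
  rw [hRepr hh, mapDomain_sub', ← Finsupp.mapDomain_comp, ← Finsupp.mapDomain_comp]
  have e : (Prod.fst ∘ fun q : T j × Ordinal => (res i j hij q.1, q.2))
      = (Prod.fst ∘ fun q : T j × Ordinal => (res i j hij q.1, j)) := rfl
  rw [e, sub_self]

theorem hcomp (hr : resCoh T res) (hh : hdef R T res h) (i j k : Ordinal)
    (hij : i < j) (hjk : j < k) (g : GMod R T k) :
    h i j hij (h j k hjk g) = h i k (hij.trans hjk) g := by
  induction g using Finsupp.induction_linear with
  | zero => simp
  | add f g hf hg => rw [map_add, map_add, map_add, hf, hg]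
  | single a b =>
      have e : (Finsupp.single a b : GMod R T k) = b • Finsupp.single a (1 : R) := by
        rw [Finsupp.smul_single', mul_one]
      rw [e, map_smul, map_smul, map_smul]
      congr 1
      rw [hh j k hjk a.1 a.2, map_sub, hh i j hij, hh i j hij, hh i k (hij.trans hjk) a.1 a.2,
        hr i j k hij hjk]
      abel

end Aux

section Branch

open CategoryTheory

variable {T : Ordinal → Type} {γ : Ordinal} {res : ∀ i j, i < j → T j → T i}


/-- Restriction maps extended to `≤`. -/
noncomputable def resLE (T : Ordinal → Type) (res : ∀ i j, i < j → T j → T i)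
    (i j : Ordinal) (hij : i ≤ j) (ν : T j) : T i :=
  if e : i = j then cast (congrArg T e.symm) ν else res i j (hij.lt_of_ne e) ν

theorem resLE_refl (i : Ordinal) (hii : i ≤ i) (ν : T i) :
    resLE T res i i hii ν = ν := by simp [resLE]

theorem resLE_lt {i j : Ordinal} (hij : i < j) (hle : i ≤ j) (ν : T j) :
    resLE T res i j hle ν = res i j hij ν := dif_neg (ne_of_lt hij)

theorem resLE_trans (hres : resCoh T res) (i j k : Ordinal)
    (hij : i ≤ j) (hjk : j ≤ k) (ν : T k) :
    resLE T res i j hij (resLE T res j k hjk ν) = resLE T res i k (hij.trans hjk) ν := by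
  rcases eq_or_lt_of_le hij with rfl | h1
  · rw [resLE_refl]
  · rcases eq_or_lt_of_le hjk with rfl | h2
    · rw [resLE_refl]
    · rw [resLE_lt h1, resLE_lt h2, resLE_lt (h1.trans h2), hres i j k h1 h2]

theorem exists_branch (hres : resCoh T res) (Y : ∀ i, Set (T i))
    (Yne : ∀ i, i < γ → (Y i).Nonempty)
    (Yfin : ∀ i, i < γ → (Y i).Finite)
    (Ydown : ∀ i j (hij : i < j), j < γ → ∀ ν ∈ Y j, res i j hij ν ∈ Y i) :
    ∃ t : ∀ i, i < γ → T i, IsBranch T γ res t := by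
  classical
  have mem_resLE : ∀ (i j : Ordinal) (hij : i ≤ j), i < γ → j < γ →
      ∀ ν ∈ Y j, resLE T res i j hij ν ∈ Y i := by
    intro i j hij hi hj ν hν
    rcases eq_or_lt_of_le hij with rfl | hlt
    · rw [resLE_refl]; exact hν
    · rw [resLE_lt hlt]; exact Ydown i j hlt hj ν hν
  let F : (↥(Set.Iio γ))ᵒᵖ ⥤ Type :=
    { obj := fun j => ↥(Y j.unop.1)
      map := fun {j j'} f => TypeCat.ofHom fun ν =>
        ⟨resLE T res j'.unop.1 j.unop.1 (CategoryTheory.leOfHom f.unop) ν.1,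
          mem_resLE _ _ _ j'.unop.2 j.unop.2 ν.1 ν.2⟩
      map_id := by
        intro j; ext ν
        apply resLE_refl
        exact le_rfl
      map_comp := by
        intro X Y' Z f g; ext ν
        symm
        apply resLE_trans hres
        · exact CategoryTheory.leOfHom g.unop
        · exact CategoryTheory.leOfHom f.unop }
  haveI : ∀ j : (↥(Set.Iio γ))ᵒᵖ, Finite (F.obj j) :=
    fun j => Set.Finite.to_subtype (Yfin _ j.unop.2)
  haveI : ∀ j : (↥(Set.Iio γ))ᵒᵖ, Nonempty (F.obj j) :=
    fun j => Set.Nonempty.to_subtype (Yne _ j.unop.2)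
  obtain ⟨s, hs⟩ := nonempty_sections_of_finite_inverse_system F
  refine ⟨fun i hi => (s (Opposite.op ⟨i, hi⟩)).1, ?_⟩
  intro i j hij hj
  have hm : (⟨i, hij.trans hj⟩ : Set.Iio γ) ≤ ⟨j, hj⟩ := Subtype.mk_le_mk.mpr hij.le
  have hms := hs ((CategoryTheory.homOfLE hm).op)
  have hval : resLE T res i j hij.le ((s (Opposite.op ⟨j, hj⟩)).1)
      = (s (Opposite.op ⟨i, hij.trans hj⟩)).1 := congrArg Subtype.val hms
  rw [resLE_lt hij] at hval
  exact hval

end Branch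

theorem stmt18 (γ : Ordinal) (hγ : Order.IsSuccLimit γ) (hcof : Cardinal.aleph0 < γ.cof)
    (res : ∀ i j, i < j → T j → T i) (hres : resCoh T res) (hT : treeHeight T γ)
    (h : ∀ i j, i < j → GMod R T j →ₗ[R] GMod R T i) (hh : hdef R T res h)
    (hnb : ∀ t : ∀ i, i < γ → T i, ¬ IsBranch T γ res t) :
    Gr R T γ h = Fact R T γ h := by
  classical
  apply Set.eq_of_subset_of_subset
  · -- Gr ⊆ Fact (the hard direction)
    intro a ha
    obtain ⟨a0, asupp, acoh⟩ := ha
    have succlt : ∀ o : Ordinal, o < γ → o + 1 < γ := fun o ho => by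
      rw [Ordinal.add_one_eq_succ]; exact hγ.succ_lt ho
    have ltsucc : ∀ o : Ordinal, o < o + 1 := fun o => by
      rw [Ordinal.add_one_eq_succ]; exact Order.lt_succ o
    -- stabilization of coefficients
    have St : ∀ i j k, i < j → j ≤ k → k < γ → ∀ p : T i × Ordinal,
        p.2 < j → a i k p = a i j p := by
      intro i j k hij hjk hkγ p hpj
      rcases eq_or_lt_of_le hjk with rfl | hlt
      · rfl
      · rw [acoh i j k hij hlt hkγ, Finsupp.add_apply, hRepr hh, Finsupp.sub_apply,
          mapDomain_apply_sum, mapDomain_apply_sum]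
        have z1 : ∑ q ∈ (a j k).support,
            (if (res i j hij q.1, q.2) = p then a j k q else 0) = 0 := by
          apply Finset.sum_eq_zero; intro q hq
          rw [if_neg]
          intro hc
          have hc2 : q.2 = p.2 := (Prod.ext_iff.mp hc).2
          exact absurd (hc2 ▸ (asupp j k hlt hkγ q hq).1) (not_lt.mpr hpj.le)
        have z2 : ∑ q ∈ (a j k).support,
            (if (res i j hij q.1, j) = p then a j k q else 0) = 0 := by
          apply Finset.sum_eq_zero; intro q hq
          rw [if_neg]
          intro hc
          have hc2 : j = p.2 := (Prod.ext_iff.mp hc).2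
          exact hpj.ne' hc2
        rw [z1, z2, sub_zero, add_zero]
    -- definition of y
    have hfin : ∀ i, (Function.support fun p : T i × Ordinal =>
        if i < p.2 ∧ p.2 < γ then a i (p.2 + 1) p else 0).Finite := by
      intro i
      by_contra hinf
      have hinf' : (Function.support fun p : T i × Ordinal =>
          if i < p.2 ∧ p.2 < γ then a i (p.2 + 1) p else 0).Infinite := hinf
      set e := hinf'.natEmbedding with he
      have hmem : ∀ n : ℕ, (i < (e n).1.2 ∧ (e n).1.2 < γ) ∧ a i ((e n).1.2 + 1) (e n).1 ≠ 0 := by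
        intro n
        have h0 := (e n).2
        simp only [Function.mem_support] at h0
        split_ifs at h0 with hc
        · exact ⟨hc, h0⟩
        · exact absurd rfl h0
      have hβγ : (⨆ n : ℕ, ((e n).1.2 + 1)) < γ :=
        Ordinal.iSup_lt_ord_lift (by simpa using hcof) fun n => succlt _ (hmem n).1.2
      have hin : ∀ n : ℕ, (e n).1 ∈ (a i (⨆ n : ℕ, ((e n).1.2 + 1))).support := by
        intro n
        rw [Finsupp.mem_support_iff]
        rw [St i ((e n).1.2 + 1) _ (lt_trans (hmem n).1.1 (ltsucc _))
          (Ordinal.le_iSup (fun n : ℕ => ((e n).1.2 + 1)) n) hβγ (e n).1 (ltsucc _)]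
        exact (hmem n).2
      have : (((a i (⨆ n : ℕ, ((e n).1.2 + 1))).support : Set (T i × Ordinal))).Infinite :=
        Set.infinite_of_injective_forall_mem
          (f := fun n : ℕ => (e n).1)
          (fun m n hmn => e.injective (Subtype.ext hmn))
          (fun n => Finset.mem_coe.mpr (hin n))
      exact this (Finset.finite_toSet _)
    set y : ∀ i, GMod R T i := fun i => Finsupp.ofSupportFinite _ (hfin i) with hy
    have yval : ∀ i (p : T i × Ordinal),
        y i p = if i < p.2 ∧ p.2 < γ then a i (p.2 + 1) p else 0 := by
      intro i p
      rw [hy]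
      exact congrFun Finsupp.ofSupportFinite_coe p
    have ysupp : ∀ i, ∀ p ∈ (y i).support, i < p.2 ∧ p.2 < γ := by
      intro i p hp
      rw [Finsupp.mem_support_iff, yval] at hp
      by_contra hc
      rw [if_neg hc] at hp
      exact hp rfl
    have yzero : ∀ i (p : T i × Ordinal), ¬(i < p.2 ∧ p.2 < γ) → y i p = 0 := by
      intro i p hc; rw [yval, if_neg hc]
    have azero : ∀ i j, i < j → j < γ → ∀ p : T i × Ordinal,
        ¬(i < p.2 ∧ p.2 < γ) → a i j p = 0 := by
      intro i j hij hj p hc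
      by_contra hne
      exact hc (asupp i j hij hj p (Finsupp.mem_support_iff.mpr hne))
    have yst : ∀ i j (hij : i < j) (hjγ : j < γ) (p : T i × Ordinal),
        p.2 < j → a i j p = y i p := by
      intro i j hij hjγ p hpj
      by_cases hc : i < p.2 ∧ p.2 < γ
      · rw [yval, if_pos hc]
        exact St i (p.2 + 1) j (lt_trans hc.1 (ltsucc _))
          (by rw [Ordinal.add_one_eq_succ]; exact Order.succ_le_of_lt hpj) hjγ p (ltsucc _)
      · rw [azero i j hij hjγ p hc, yzero i p hc]
    -- main computational claim, step A
    have claimA : ∀ j k (hjk : j < k), k < γ →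
        a j (k + 1) = y j + Finsupp.mapDomain
          (fun q : T k × Ordinal => (res j k hjk q.1, q.2)) (a k (k + 1) - y k) := by
      intro j k hjk hkγ
      have hk1 : k + 1 < γ := succlt k hkγ
      have wsupp : ∀ q ∈ (a k (k + 1) - y k).support, k < q.2 ∧ q.2 < γ := by
        intro q hq
        rcases Finset.mem_union.mp (Finsupp.support_sub hq) with h1 | h1
        · exact asupp k (k + 1) (ltsucc k) hk1 q h1
        · exact ysupp k q h1
      ext p
      obtain ⟨ν, l⟩ := p
      rw [Finsupp.add_apply]
      rcases le_or_gt l k with hlk | hkl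
      · have z : Finsupp.mapDomain (fun q : T k × Ordinal => (res j k hjk q.1, q.2))
            (a k (k + 1) - y k) (ν, l) = 0 := by
          rw [mapDomain_apply_sum]
          apply Finset.sum_eq_zero; intro q hq
          rw [if_neg]
          intro hc
          have hc2 : q.2 = l := (Prod.ext_iff.mp hc).2
          exact absurd (hc2 ▸ (wsupp q hq).1) (not_lt.mpr hlk)
        rw [z, add_zero]
        exact yst j (k + 1) (hjk.trans (ltsucc k)) hk1 (ν, l) (lt_of_le_of_lt hlk (ltsucc k))
      · rcases lt_or_ge l γ with hlγ | hγl
        · have hl1 : l + 1 < γ := succlt l hlγ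
          have f2 : ∀ g : GMod R T k, Finsupp.mapDomain
              (fun q : T k × Ordinal => (res j k hjk q.1, k)) g (ν, l) = 0 := by
            intro g
            rw [mapDomain_apply_sum]
            apply Finset.sum_eq_zero; intro q hq
            rw [if_neg]
            intro hc
            have hc2 : k = l := (Prod.ext_iff.mp hc).2
            exact (ne_of_lt hkl) hc2
          have f1 : a j (k + 1) (ν, l) = a j k (ν, l) + Finsupp.mapDomain
              (fun q : T k × Ordinal => (res j k hjk q.1, q.2)) (a k (k + 1)) (ν, l) := by
            rw [acoh j k (k + 1) hjk (ltsucc k) hk1, Finsupp.add_apply, hRepr hh,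
              Finsupp.sub_apply, f2, sub_zero]
          have f3 : y j (ν, l) = a j k (ν, l) + Finsupp.mapDomain
              (fun q : T k × Ordinal => (res j k hjk q.1, q.2)) (a k (l + 1)) (ν, l) := by
            rw [← yst j (l + 1) (hjk.trans (hkl.trans (ltsucc l))) hl1 (ν, l) (ltsucc l),
              acoh j k (l + 1) hjk (hkl.trans (ltsucc l)) hl1, Finsupp.add_apply, hRepr hh,
              Finsupp.sub_apply, f2, sub_zero]
          have f5 : Finsupp.mapDomain (fun q : T k × Ordinal => (res j k hjk q.1, q.2))
                (a k (l + 1)) (ν, l)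
              = Finsupp.mapDomain (fun q : T k × Ordinal => (res j k hjk q.1, q.2))
                (y k) (ν, l) := by
            apply mapDomain_sec_congr
            intro q hq
            exact yst k (l + 1) (hkl.trans (ltsucc l)) hl1 q (lt_of_eq_of_lt hq (ltsucc l))
          rw [mapDomain_sub', Finsupp.sub_apply, f1, f3, f5]
          abel
        · have nc : ¬(j < l ∧ l < γ) := fun hc => absurd hc.2 (not_lt.mpr hγl)
          have z : Finsupp.mapDomain (fun q : T k × Ordinal => (res j k hjk q.1, q.2))
              (a k (k + 1) - y k) (ν, l) = 0 := by
            rw [mapDomain_apply_sum]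
            apply Finset.sum_eq_zero; intro q hq
            rw [if_neg]
            intro hc
            have hc2 : q.2 = l := (Prod.ext_iff.mp hc).2
            exact absurd (hc2 ▸ (wsupp q hq).2) (not_lt.mpr hγl)
          rw [azero j (k + 1) (hjk.trans (ltsucc k)) hk1 (ν, l) nc, yzero j (ν, l) nc, z,
            add_zero]
    -- main computational claim, step E
    have claimE : ∀ j k (hjk : j < k), k < γ →
        a j k - y j + h j k hjk (y k)
          = Finsupp.mapDomain (fun q : T k × Ordinal => (res j k hjk q.1, k))
              (a k (k + 1) - y k) := by
      intro j k hjk hkγ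
      have hk1 : k + 1 < γ := succlt k hkγ
      have e1 := claimA j k hjk hkγ
      have e2 : a j (k + 1) = a j k + (Finsupp.mapDomain
            (fun q : T k × Ordinal => (res j k hjk q.1, q.2)) (a k (k + 1))
          - Finsupp.mapDomain (fun q : T k × Ordinal => (res j k hjk q.1, k))
            (a k (k + 1))) := by
        rw [acoh j k (k + 1) hjk (ltsucc k) hk1, hRepr hh]
      rw [e2, mapDomain_sub'] at e1
      rw [hRepr hh, mapDomain_sub']
      set P := Finsupp.mapDomain (fun q : T k × Ordinal => (res j k hjk q.1, q.2)) (a k (k + 1)) with hP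
      set Q := Finsupp.mapDomain (fun q : T k × Ordinal => (res j k hjk q.1, k)) (a k (k + 1)) with hQ
      set U := Finsupp.mapDomain (fun q : T k × Ordinal => (res j k hjk q.1, q.2)) (y k) with hU
      set V := Finsupp.mapDomain (fun q : T k × Ordinal => (res j k hjk q.1, k)) (y k) with hV
      have e6 : a j k - y j + (U - V) - (Q - V) = (a j k + (P - Q)) - (y j + (P - U)) := by
        abel
      rw [← sub_eq_zero, e6, e1, sub_self]
    -- mass invariance and coherence of the level measures
    have massinv : ∀ j k (hjk : j < k), k < γ →
        Finsupp.mapDomain Prod.fst (a j k) = Finsupp.mapDomain Prod.fst (a j (j + 1)) := by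
      intro j k hjk hkγ
      rcases eq_or_lt_of_le (by rw [Ordinal.add_one_eq_succ]; exact Order.succ_le_of_lt hjk :
          j + 1 ≤ k) with heq | hlt
      · rw [← heq]
      · rw [acoh j (j + 1) k (ltsucc j) hlt hkγ, Finsupp.mapDomain_add, hmass hh, add_zero]
    have dmcoh : ∀ j k (hjk : j < k), k < γ →
        (Finsupp.mapDomain Prod.fst (a j (j + 1)) - Finsupp.mapDomain Prod.fst (y j))
          = Finsupp.mapDomain (res j k hjk)
              (Finsupp.mapDomain Prod.fst (a k (k + 1)) - Finsupp.mapDomain Prod.fst (y k)) := by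
      intro j k hjk hkγ
      have hcl := congrArg (Finsupp.mapDomain (M := R) Prod.fst) (claimE j k hjk hkγ)
      rw [Finsupp.mapDomain_add, mapDomain_sub', hmass hh, add_zero] at hcl
      rw [← Finsupp.mapDomain_comp] at hcl
      have ec : (Prod.fst ∘ fun q : T k × Ordinal => (res j k hjk q.1, k))
          = (res j k hjk) ∘ Prod.fst := rfl
      rw [ec, Finsupp.mapDomain_comp, massinv j k hjk hkγ] at hcl
      rw [hcl, mapDomain_sub']
    -- the measures vanish (otherwise we could build a branch)
    have dmzero : ∀ k, k < γ →
        Finsupp.mapDomain Prod.fst (a k (k + 1)) - Finsupp.mapDomain Prod.fst (y k) = 0 := by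
      by_contra hcon
      push_neg at hcon
      obtain ⟨j0, hj0γ, hne⟩ := hcon
      set dm : ∀ k, T k →₀ R := fun k =>
        Finsupp.mapDomain Prod.fst (a k (k + 1)) - Finsupp.mapDomain Prod.fst (y k) with hdm
      have dmcoh' : ∀ j k (hjk : j < k), k < γ → dm j = Finsupp.mapDomain (res j k hjk) (dm k) :=
        fun j k hjk hkγ => dmcoh j k hjk hkγ
      have hne' : dm j0 ≠ 0 := hne
      have Sne : ∀ k, j0 ≤ k → k < γ → dm k ≠ 0 := by
        intro k hk hkγ h0
        rcases eq_or_lt_of_le hk with rfl | hlt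
        · exact hne' h0
        · exact hne' (by rw [dmcoh' j0 k hlt hkγ, h0, Finsupp.mapDomain_zero])
      set Yb : ∀ i, Set (T i) := fun i =>
        {ν | ∃ k, ∃ hk : i < k ∧ k < γ, ν ∈ res i k hk.1 '' ↑(dm k).support} with hYb
      have Ydown : ∀ i j (hij : i < j), j < γ → ∀ ν ∈ Yb j, res i j hij ν ∈ Yb i := by
        intro i j hij hjγ' ν hν
        obtain ⟨k, hk, η, hη, rfl⟩ := hν
        exact ⟨k, ⟨hij.trans hk.1, hk.2⟩, η, hη, (hres i j k hij hk.1 η).symm⟩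
      have Rmono : ∀ i k k' (hik : i < k) (hkk' : k ≤ k'), k' < γ →
          res i k hik '' ↑(dm k).support
            ⊆ res i k' (lt_of_lt_of_le hik hkk') '' ↑(dm k').support := by
        intro i k k' hik hkk' hk'γ
        rcases eq_or_lt_of_le hkk' with rfl | hlt
        · exact subset_rfl
        · intro x hx
          obtain ⟨η, hη, rfl⟩ := hx
          rw [Finset.mem_coe, dmcoh' k k' hlt hk'γ] at hη
          obtain ⟨μ, hμ, rfl⟩ := Finset.mem_image.mp (Finsupp.mapDomain_support hη)
          exact ⟨μ, hμ, (hres i k k' hik hlt μ).symm⟩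
      have Yne : ∀ i, i < γ → (Yb i).Nonempty := by
        intro i hiγ
        have hik : i < max i j0 + 1 := lt_of_le_of_lt (le_max_left _ _) (ltsucc _)
        have hj0k : j0 ≤ max i j0 + 1 := (le_max_right i j0).trans (ltsucc _).le
        have hkγ : max i j0 + 1 < γ := succlt _ (max_lt hiγ hj0γ)
        obtain ⟨η, hη⟩ := Finsupp.support_nonempty_iff.mpr (Sne _ hj0k hkγ)
        exact ⟨res i _ hik η, _, ⟨hik, hkγ⟩, η, hη, rfl⟩
      have Yfin : ∀ i, i < γ → (Yb i).Finite := by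
        intro i hiγ
        by_contra hinf
        have hinf' : (Yb i).Infinite := hinf
        set e := hinf'.natEmbedding with he
        have hmem : ∀ n : ℕ, ∃ k, ∃ hk : i < k ∧ k < γ,
            ((e n : T i)) ∈ res i k hk.1 '' ↑(dm k).support := fun n => (e n).2
        choose kf hkf hmem2 using hmem
        have hβγ : (⨆ n, kf n) < γ :=
          Ordinal.iSup_lt_ord_lift (by simpa using hcof) fun n => (hkf n).2
        have hik' : i < (⨆ n, kf n) ⊔ (i + 1) :=
          lt_of_lt_of_le (ltsucc i) (le_max_right _ _)
        have hk'γ : (⨆ n, kf n) ⊔ (i + 1) < γ := max_lt hβγ (succlt i hiγ)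
        have hall : ∀ n : ℕ, ((e n : T i)) ∈
            res i _ hik' '' ↑(dm ((⨆ n, kf n) ⊔ (i + 1))).support := by
          intro n
          apply Rmono i (kf n) _ (hkf n).1 ((Ordinal.le_iSup kf n).trans (le_max_left _ _)) hk'γ
          exact hmem2 n
        have : (res i _ hik' '' ↑(dm ((⨆ n, kf n) ⊔ (i + 1))).support).Infinite :=
          Set.infinite_of_injective_forall_mem
            (f := fun n : ℕ => (e n : T i))
            (fun m n hmn => e.injective (Subtype.ext hmn)) hall
        exact this ((Finset.finite_toSet _).image _)
      obtain ⟨t, ht⟩ := exists_branch hres Yb Yne Yfin Ydown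
      exact hnb t ht
    -- conclusion: a ∈ Fact
    refine ⟨a0, y, fun i _ => ysupp i, ?_⟩
    intro i j hij hjγ
    have hE := claimE i j hij hjγ
    have hz : Finsupp.mapDomain (fun q : T j × Ordinal => (res i j hij q.1, j))
        (a j (j + 1) - y j) = 0 := by
      have ec : (fun q : T j × Ordinal => (res i j hij q.1, j))
          = ((fun t : T i => (t, j)) ∘ ((res i j hij) ∘ Prod.fst)) := rfl
      rw [ec, Finsupp.mapDomain_comp, Finsupp.mapDomain_comp, mapDomain_sub',
        dmzero j hjγ, Finsupp.mapDomain_zero, Finsupp.mapDomain_zero]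
    rw [hz] at hE
    rw [← sub_eq_zero]
    rw [show a i j - (y i - h i j hij (y j)) = a i j - y i + h i j hij (y j) from by abel, hE]
  · -- Fact ⊆ Gr
    rintro a ⟨a0, y, ysupp, hay⟩
    refine ⟨a0, ?_, ?_⟩
    · intro i j hij hjγ p hp
      rw [hay i j hij hjγ] at hp
      rcases Finset.mem_union.mp (Finsupp.support_sub hp) with h1 | h1
      · exact ysupp i (hij.trans hjγ) p h1
      · rw [hRepr hh] at h1
        rcases Finset.mem_union.mp (Finsupp.support_sub h1) with h2 | h2
        · obtain ⟨q, hq, rfl⟩ := Finset.mem_image.mp (Finsupp.mapDomain_support h2)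
          exact ⟨hij.trans (ysupp j hjγ q hq).1, (ysupp j hjγ q hq).2⟩
        · obtain ⟨q, hq, rfl⟩ := Finset.mem_image.mp (Finsupp.mapDomain_support h2)
          exact ⟨hij, hjγ⟩
    · intro i j k hij hjk hkγ
      rw [hay i k (hij.trans hjk) hkγ, hay i j hij (hjk.trans hkγ), hay j k hjk hkγ,
        map_sub, hcomp hres hh i j k hij hjk]
      abel


end Paper644
end
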